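/- arXiv:2203.08651 — 4 statements merged into one kernel-verified Lean document; each statement's English description precedes it below -/
import Mathlib

section
/- Let α₁, α₂, χ ∈ 𝒦∞, α₃ ∈ 𝒦 and φ ∈ 𝒫 be given. Then there exist β ∈ 𝒦ℒ and γ ∈ 𝒦∞, depending only on α₁, α₂, α₃, χ and φ, with the following property. Let X be a real normed space, t₀ ∈ ℝ, (tᵢ) an impulse time sequence, r ≥ 0, x: [t₀,∞) → X, and V: [t₀,∞) × X → [0,∞) satisfy α₁(‖y‖) ≤ V(t,y) ≤ α₂(‖y‖) for all t ≥ t₀ and all y ∈ X. Assume v(t) := V(t, x(t)) is impulsive-regular and: (a) D⁺v(t) ≤ −φ(v(t)) at every non-impulse time t with v(t) ≥ χ(r); (b) v(tᵢ) ≤ v(tᵢ⁻) at every impulse time tᵢ with v(tᵢ⁻) ≥ χ(r); (c) v(tᵢ) ≤ α₃(r) at every impulse time tᵢ with v(tᵢ⁻) < χ(r). Then ‖x(t)‖ ≤ β(‖x(t₀)‖, t − t₀) + γ(r) for all t ≥ t₀. -/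
/-!
Along the trajectory, `v t = V t (x t)` stays below the barrier `max (ψ (K - t)) c`, where
`c = max (χ r) (α₃ r)` and `ψ` is increasing with `ψ' < φ ∘ ψ`. Between impulses, at a first
contact with the barrier the Dini condition pushes `v` strictly below it; at an impulse, `v`
either does not increase or is reset below `α₃ r ≤ c`. Choosing `K` so that the barrier starts
at `α₂ ‖x t₀‖` and applying `α₁⁻¹` gives the estimate with `β ρ s = α₁⁻¹ (ψ (ψ⁻¹ (α₂ ρ) - s))`
and `γ r = α₁⁻¹ c`.
-/

open Filter Topology Set MeasureTheory

noncomputable section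

/-- Class 𝒦: continuous, strictly increasing on `[0,∞)`, vanishing at `0`. -/
def ClassK (γ : ℝ → ℝ) : Prop :=
  ContinuousOn γ (Set.Ici 0) ∧ StrictMonoOn γ (Set.Ici 0) ∧ γ 0 = 0

/-- Class 𝒦∞: class 𝒦 and unbounded. -/
def ClassKInf (γ : ℝ → ℝ) : Prop :=
  ClassK γ ∧ Filter.Tendsto γ Filter.atTop Filter.atTop

/-- Class 𝒦ℒ. -/
def ClassKL (β : ℝ → ℝ → ℝ) : Prop :=
  (∀ s, 0 ≤ s → ClassK (fun r => β r s)) ∧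
  (∀ r, 0 ≤ r → AntitoneOn (fun s => β r s) (Set.Ici 0) ∧
    Filter.Tendsto (fun s => β r s) Filter.atTop (nhds 0))

/-- Class 𝒫: continuous, positive definite. -/
def ClassP (φ : ℝ → ℝ) : Prop :=
  ContinuousOn φ (Set.Ici 0) ∧ φ 0 = 0 ∧ ∀ r, 0 < r → 0 < φ r

/-- Upper right Dini derivative `D⁺v(t) = limsup_{s→0⁺} (v(t+s) − v(t))/s`, valued in `EReal`. -/
def DiniUpper (v : ℝ → ℝ) (t : ℝ) : EReal :=
  Filter.limsup (fun s => (((v (t + s) - v t) / s : ℝ) : EReal)) (nhdsWithin 0 (Set.Ioi 0))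

/-- Impulse time sequence with initial time `t₀ = τ 0`: strictly increasing and tending to `∞`;
the impulse times are `τ i` for `i ≥ 1`. -/
def IsImpulseSeq (t₀ : ℝ) (τ : ℕ → ℝ) : Prop :=
  τ 0 = t₀ ∧ StrictMono τ ∧ Filter.Tendsto τ Filter.atTop Filter.atTop

/-- The set `S = {tᵢ : i ≥ 1}` of impulse times. -/
def impulseSet (τ : ℕ → ℝ) : Set ℝ := {s | ∃ i : ℕ, 1 ≤ i ∧ τ i = s}

/-- Impulsive-regular function on `[t₀,∞)`: right-continuous everywhere, continuous (within
`[t₀,∞)`) at every non-impulse time, and left limits exist at every impulse time. -/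
def ImpulsiveRegular (t₀ : ℝ) (τ : ℕ → ℝ) (v : ℝ → ℝ) : Prop :=
  (∀ t, t₀ ≤ t → ContinuousWithinAt v (Set.Ici t) t) ∧
  (∀ t, t₀ ≤ t → t ∉ impulseSet τ → ContinuousWithinAt v (Set.Ici t₀) t) ∧
  (∀ i : ℕ, 1 ≤ i → ∃ L : ℝ, Filter.Tendsto v (nhdsWithin (τ i) (Set.Iio (τ i))) (nhds L))

namespace ClassK

variable {f g : ℝ → ℝ}

theorem nonneg (hf : ClassK f) {r : ℝ} (hr : 0 ≤ r) : 0 ≤ f r := by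
  simpa [hf.2.2] using hf.2.1.monotoneOn self_mem_Ici hr hr

theorem comp (hg : ClassK g) (hf : ClassK f) : ClassK (fun r => g (f r)) :=
  ⟨hg.1.comp hf.1 fun _ hr => hf.nonneg hr,
    fun _ ha _ hb hab => hg.2.1 (hf.nonneg ha) (hf.nonneg hb) (hf.2.1 ha hb hab),
    by simp [hf.2.2, hg.2.2]⟩

theorem sup (hf : ClassK f) (hg : ClassK g) : ClassK (fun r => max (f r) (g r)) :=
  ⟨ContinuousOn.sup hf.1 hg.1,
    fun _ ha _ hb hab => max_lt_max (hf.2.1 ha hb hab) (hg.2.1 ha hb hab),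
    by simp [hf.2.2, hg.2.2]⟩

end ClassK

namespace ClassKInf

variable {f g : ℝ → ℝ}

theorem comp (hg : ClassKInf g) (hf : ClassKInf f) : ClassKInf (fun r => g (f r)) :=
  ⟨hg.1.comp hf.1, hg.2.comp hf.2⟩

theorem sup (hf : ClassKInf f) (hg : ClassK g) :
    ClassKInf (fun r => max (f r) (g r)) :=
  ⟨hf.1.sup hg, tendsto_atTop_mono (fun _ => le_max_left _ _) hf.2⟩

end ClassKInf

namespace ClassKL

variable {β : ℝ → ℝ → ℝ}

theorem comp_left {g : ℝ → ℝ} (hg : ClassK g) (hβ : ClassKL β) :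
    ClassKL (fun r s => g (β r s)) := by
  refine ⟨fun s hs => hg.comp (hβ.1 s hs), fun r hr => ⟨?_, ?_⟩⟩
  · exact fun s hs s' hs' hss' => hg.2.1.monotoneOn ((hβ.1 s' hs').nonneg hr)
      ((hβ.1 s hs).nonneg hr) ((hβ.2 r hr).1 hs hs' hss')
  · have hβ0 : Tendsto (fun s => β r s) atTop (𝓝[Ici 0] 0) :=
      tendsto_nhdsWithin_iff.2 ⟨(hβ.2 r hr).2,
        eventually_atTop.2 ⟨0, fun s hs => (hβ.1 s hs).nonneg hr⟩⟩
    simpa [Function.comp_def, hg.2.2] using (hg.1 0 self_mem_Ici).tendsto.comp hβ0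

theorem comp_right {α : ℝ → ℝ} (hβ : ClassKL β) (hα : ClassK α) :
    ClassKL (fun r s => β (α r) s) :=
  ⟨fun s hs => (hβ.1 s hs).comp hα, fun r hr => hβ.2 (α r) (hα.nonneg hr)⟩

end ClassKL

theorem OrderIso.classKInf (e : ℝ ≃o ℝ) (h0 : e 0 = 0) : ClassKInf e :=
  ⟨⟨e.continuous.continuousOn, e.strictMono.strictMonoOn _, h0⟩, e.tendsto_atTop⟩

theorem ClassKInf.exists_orderIso {α : ℝ → ℝ} (hα : ClassKInf α) :
    ∃ e : ℝ ≃o ℝ, EqOn e α (Ici 0) := by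
  obtain ⟨⟨hcont, hmono, h0⟩, htop⟩ := hα
  set E : ℝ → ℝ := fun u => α (max u 0) + min u 0
  have hE : EqOn E α (Ici 0) := fun u (hu : 0 ≤ u) => by simp [E, hu]
  have hE_strictMono : StrictMono E := by
    intro u w huw
    rcases lt_or_ge u 0 with hu | hu
    · have : α (max u 0) ≤ α (max w 0) :=
        hmono.monotoneOn (mem_Ici.2 (le_max_right _ _)) (mem_Ici.2 (le_max_right _ _))
          (max_le_max huw.le le_rfl)
      have : min u 0 < min w 0 := lt_min (min_lt_of_left_lt huw) (min_lt_of_left_lt hu)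
      simp only [E]
      linarith
    · rw [hE hu, hE (hu.trans huw.le)]
      exact hmono hu (hu.trans huw.le) huw
  have hE_cont : Continuous E :=
    ((hcont.comp_continuous (continuous_id.max continuous_const) fun u => le_max_right u 0).add
      (continuous_id.min continuous_const) :)
  have hE_top : Tendsto E atTop atTop :=
    htop.congr' (eventually_ge_atTop 0 |>.mono fun u hu => (hE hu).symm)
  have hE_bot : Tendsto E atBot atBot :=
    tendsto_id.congr' (eventually_le_atBot 0 |>.mono fun u hu => by simp [E, hu, h0])
  exact ⟨hE_strictMono.orderIsoOfSurjective E (hE_cont.surjective hE_top hE_bot), hE⟩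

/-- For `ψ = exp ∘ e.symm`, this is `ψ (ψ⁻¹ m - s)`: the barrier started at level `m > 0`,
evaluated after time `s`, extended by `0` at `m = 0`. -/
def logFlow (e : ℝ ≃o ℝ) (m s : ℝ) : ℝ :=
  if 0 < m then Real.exp (e.symm (e (Real.log m) - s)) else 0

namespace logFlow

variable (e : ℝ ≃o ℝ)

theorem of_pos {m : ℝ} (hm : 0 < m) (s : ℝ) :
    logFlow e m s = Real.exp (e.symm (e (Real.log m) - s)) := if_pos hm

theorem tendsto_nhdsGT_zero (s : ℝ) : Tendsto (logFlow e · s) (𝓝[>] 0) (𝓝 0) := by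
  have h : Tendsto (fun m => e (Real.log m) - s) (𝓝[>] 0) atBot := by
    simpa [sub_eq_add_neg] using tendsto_atBot_add_const_right _ (-s)
      (e.tendsto_atBot.comp Real.tendsto_log_nhdsGT_zero)
  refine (Real.tendsto_exp_atBot.comp (e.symm.tendsto_atBot.comp h)).congr' ?_
  filter_upwards [self_mem_nhdsWithin] with m hm using (of_pos e hm s).symm

theorem classKL : ClassKL (logFlow e) := by
  refine ⟨fun s _ => ⟨?_, ?_, by simp [logFlow]⟩, fun m hm => ⟨?_, ?_⟩⟩
  · intro m (hm : 0 ≤ m)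
    rcases hm.eq_or_lt with rfl | hm
    · rw [← continuousWithinAt_Ioi_iff_Ici, ContinuousWithinAt]
      simpa [logFlow] using tendsto_nhdsGT_zero e s
    · have hcont : ContinuousAt (fun m => Real.exp (e.symm (e (Real.log m) - s))) m :=
        Real.continuous_exp.continuousAt.comp (e.symm.continuous.continuousAt.comp
          ((e.continuous.continuousAt.comp (Real.continuousAt_log hm.ne')).sub
            continuousAt_const))
      refine (hcont.congr ?_).continuousWithinAt
      filter_upwards [Ioi_mem_nhds hm] with m' hm' using (of_pos e hm' s).symm
  · intro m (hm : 0 ≤ m) m' _ hmm'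
    have hm' : 0 < m' := hm.trans_lt hmm'
    show logFlow e m s < logFlow e m' s
    rw [of_pos e hm']
    rcases hm.eq_or_lt with rfl | hm
    · simpa [logFlow] using Real.exp_pos _
    · rw [of_pos e hm, Real.exp_lt_exp, e.symm.lt_iff_lt, sub_lt_sub_iff_right, e.lt_iff_lt]
      exact Real.log_lt_log hm hmm'
  · intro s _ s' _ hss'
    unfold logFlow
    split_ifs
    · exact Real.exp_monotone (e.symm.monotone (by linarith))
    · exact le_rfl
  · rcases (show (0 : ℝ) ≤ m from hm).eq_or_lt with rfl | hm
    · simp [logFlow]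
    · have h : Tendsto (fun s => e (Real.log m) - s) atTop atBot := by
        simpa [sub_eq_add_neg] using
          tendsto_atBot_add_const_left _ (e (Real.log m)) tendsto_neg_atTop_atBot
      refine (Real.tendsto_exp_atBot.comp (e.symm.tendsto_atBot.comp h)).congr fun s => ?_
      exact (of_pos e hm s).symm

end logFlow

theorem OrderIso.exists_eq_id_add {F : ℝ → ℝ} (hF : Monotone F) (hc : Continuous F) :
    ∃ e : ℝ ≃o ℝ, ∀ y, e y = y + F y := by
  have hmono : StrictMono fun y => y + F y := strictMono_id.add_monotone hF
  have htop : Tendsto (fun y => y + F y) atTop atTop :=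
    tendsto_atTop_mono' _ (eventually_ge_atTop 0 |>.mono fun y hy => by simp [hF hy])
      (tendsto_atTop_add_const_right _ (F 0) tendsto_id)
  have hbot : Tendsto (fun y => y + F y) atBot atBot :=
    tendsto_atBot_mono' _ (eventually_le_atBot 0 |>.mono fun y hy => by simp [hF hy])
      (tendsto_atBot_add_const_right _ (F 0) tendsto_id)
  exact ⟨hmono.orderIsoOfSurjective _ ((continuous_id.add hc).surjective htop hbot),
    fun _ => rfl⟩

/-- With `e u = u + ∫₀ᵘ exp s / φ (exp s) ds`, the function `ψ = exp ∘ e.symm` satisfies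
`ψ' = ψ φ(ψ) / (ψ + φ(ψ)) < φ(ψ)`; the summand `u` makes `e` a bijection of `ℝ`. -/
theorem exists_orderIso_hasDerivAt_exp_symm_lt {φ : ℝ → ℝ} (hφc : ContinuousOn φ (Ioi 0))
    (hφ : ∀ u, 0 < u → 0 < φ u) :
    ∃ e : ℝ ≃o ℝ, ∃ ψ' : ℝ → ℝ, (∀ y, HasDerivAt (fun y => Real.exp (e.symm y)) (ψ' y) y) ∧
      ∀ y, ψ' y < φ (Real.exp (e.symm y)) := by
  set k : ℝ → ℝ := fun s => Real.exp s / φ (Real.exp s)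
  have hk_pos : ∀ s, 0 < k s := fun s => div_pos (Real.exp_pos s) (hφ _ (Real.exp_pos s))
  have hk : Continuous k := Real.continuous_exp.div
    (hφc.comp_continuous Real.continuous_exp Real.exp_pos) fun s => (hφ _ (Real.exp_pos s)).ne'
  have hF : ∀ y, HasDerivAt (fun y => ∫ s in (0 : ℝ)..y, k s) (k y) y := fun y =>
    (hk.integral_hasStrictDerivAt 0 y).hasDerivAt
  obtain ⟨e, he⟩ := OrderIso.exists_eq_id_add
    (monotone_of_hasDerivAt_nonneg hF fun s => (hk_pos s).le)
    (continuous_iff_continuousAt.2 fun y => (hF y).continuousAt)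
  have he' : ∀ u, HasDerivAt e (1 + k u) u := fun u => by
    rw [funext he]
    exact (hasDerivAt_id' u).add (hF u)
  refine ⟨e, fun y => Real.exp (e.symm y) * (1 + k (e.symm y))⁻¹, fun y => ?_, fun y => ?_⟩
  · have hsymm : HasDerivAt e.symm (1 + k (e.symm y))⁻¹ y :=
      (he' _).of_local_left_inverse e.symm.continuous.continuousAt
        (by linarith [hk_pos (e.symm y)]) (Eventually.of_forall e.apply_symm_apply)
    exact (Real.hasDerivAt_exp _).comp y hsymm
  · have hp := Real.exp_pos (e.symm y)
    have hq := hφ _ hp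
    show Real.exp (e.symm y) * (1 + k (e.symm y))⁻¹ < _
    rw [← div_eq_mul_inv, div_lt_iff₀ (by linarith [hk_pos (e.symm y)])]
    simp only [k]
    rw [mul_add, mul_div_cancel₀ _ hq.ne']
    linarith

theorem image_le_of_frequently_le_of_eq {f B : ℝ → ℝ} {a b : ℝ}
    (hf : ContinuousOn f (Icc a b)) (hB : ContinuousOn B (Icc a b)) (ha : f a ≤ B a)
    (hcontact : ∀ x ∈ Ico a b, f x = B x → ∃ᶠ z in 𝓝[>] x, f z ≤ B z) :
    ∀ x ∈ Icc a b, f x ≤ B x := by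
  have hclosed : IsClosed ({x | f x ≤ B x} ∩ Icc a b) := by
    rw [inter_comm]
    exact (hf.prodMk hB).preimage_isClosed_of_isClosed isClosed_Icc isClosed_le_prod
  refine fun x hx => hclosed.Icc_subset_of_forall_exists_gt ha ?_ hx
  rintro x ⟨hxB, hx⟩ y hy
  have hfreq : ∃ᶠ z in 𝓝[>] x, f z ≤ B z := by
    rcases (show f x ≤ B x from hxB).lt_or_eq with hlt | heq
    · have hev : ∀ᶠ z in 𝓝[Icc a b] x, f z < B z :=
        (hf x (Ico_subset_Icc_self hx)).eventually_lt (hB x (Ico_subset_Icc_self hx)) hlt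
      exact (Eventually.frequently (nhdsWithin_le_of_mem (Icc_mem_nhdsGT_of_mem hx) hev)).mono
        fun _ => le_of_lt
    · exact hcontact x hx heq
  exact (hfreq.and_eventually (Ioc_mem_nhdsGT hy)).exists

theorem eventually_slope_lt_of_diniUpper_lt {v : ℝ → ℝ} {t r : ℝ}
    (h : DiniUpper v t < r) : ∀ᶠ z in 𝓝[>] t, slope v t z < r := by
  have hmap : map (fun s => t + s) (𝓝[>] 0) = 𝓝[>] t := by
    simp
  rw [← hmap, eventually_map]
  filter_upwards [eventually_lt_of_limsup_lt h] with s hs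
  rw [slope_def_field, add_sub_cancel_left]
  exact_mod_cast hs

theorem eventually_lt_of_diniUpper_lt_deriv {v B : ℝ → ℝ} {t B' : ℝ}
    (hv : DiniUpper v t < B') (hB : HasDerivWithinAt B B' (Ioi t) t) (ht : v t ≤ B t) :
    ∀ᶠ z in 𝓝[>] t, v z < B z := by
  obtain ⟨r, hvr, hrB⟩ := EReal.lt_iff_exists_real_btwn.1 hv
  have hBr : ∀ᶠ z in 𝓝[>] t, r < slope B t z :=
    ((hasDerivWithinAt_iff_tendsto_slope' (lt_irrefl t)).1 hB).eventually
      (lt_mem_nhds (by exact_mod_cast hrB))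
  filter_upwards [eventually_slope_lt_of_diniUpper_lt hvr, hBr, self_mem_nhdsWithin]
    with z hvz hBz (hz : t < z)
  rw [slope_def_field] at hvz hBz
  have := (div_lt_div_iff_of_pos_right (sub_pos.2 hz)).1 (hvz.trans hBz)
  linarith

section Barrier

variable {φ ψ ψ' v : ℝ → ℝ} {a b c K : ℝ}

theorem le_max_barrier_of_lt (hψ : ∀ y, HasDerivAt ψ (ψ' y) y) (hψφ : ∀ y, ψ' y < φ (ψ y))
    (hφc : 0 < φ c) (hv : ContinuousOn v (Icc a b))
    (hdini : ∀ x ∈ Ioo a b, c ≤ v x → DiniUpper v x ≤ ((-φ (v x) : ℝ) : EReal))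
    (ha : v a < max (ψ (K - a)) c) :
    ∀ t ∈ Icc a b, v t ≤ max (ψ (K - t)) c := by
  have hψc : Continuous ψ := continuous_iff_continuousAt.2 fun y => (hψ y).continuousAt
  refine image_le_of_frequently_le_of_eq hv
    ((hψc.comp (continuous_const.sub continuous_id)).max continuous_const).continuousOn ha.le ?_
  intro x hx hvx
  have hxa : a < x := hx.1.lt_of_ne fun hax => ha.ne (hax ▸ hvx)
  have hdx := hdini x ⟨hxa, hx.2⟩ (hvx ▸ le_max_right _ _)
  refine Eventually.frequently ?_
  rcases le_total c (ψ (K - x)) with hcψ | hψc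
  · have hvx' : v x = ψ (K - x) := hvx.trans (max_eq_left hcψ)
    have hB : HasDerivAt (fun z => ψ (K - z)) (-ψ' (K - x)) x :=
      (hψ (K - x)).comp_const_sub K x
    have hlt : ((-φ (v x) : ℝ) : EReal) < ((-ψ' (K - x) : ℝ) : EReal) := by
      rw [hvx']
      exact_mod_cast neg_lt_neg (hψφ (K - x))
    filter_upwards [eventually_lt_of_diniUpper_lt_deriv (hdx.trans_lt hlt) hB.hasDerivWithinAt
      hvx'.le] with z hz using hz.le.trans (le_max_left _ _)
  · have hvx' : v x = c := hvx.trans (max_eq_right hψc)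
    have hlt : ((-φ (v x) : ℝ) : EReal) < ((0 : ℝ) : EReal) := by
      rw [hvx']
      exact_mod_cast neg_lt_zero.2 hφc
    filter_upwards [eventually_lt_of_diniUpper_lt_deriv (hdx.trans_lt hlt)
      (hasDerivWithinAt_const x _ c) hvx'.le] with z hz using hz.le.trans (le_max_right _ _)

theorem le_max_barrier (hψ : ∀ y, HasDerivAt ψ (ψ' y) y) (hψφ : ∀ y, ψ' y < φ (ψ y))
    (hψ_mono : StrictMono ψ) (hφ : ∀ u, 0 < u → 0 < φ u) (hc : 0 ≤ c)
    (hv : ContinuousOn v (Icc a b))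
    (hdini : ∀ x ∈ Ioo a b, c ≤ v x → DiniUpper v x ≤ ((-φ (v x) : ℝ) : EReal))
    (ha : v a ≤ max (ψ (K - a)) c) :
    ∀ t ∈ Icc a b, v t ≤ max (ψ (K - t)) c := by
  intro t ht
  have hψc : Continuous ψ := continuous_iff_continuousAt.2 fun y => (hψ y).continuousAt
  have hδ : ∀ δ > 0, v t ≤ max (ψ (K + δ - t)) (c + δ) := fun δ hδ =>
    le_max_barrier_of_lt hψ hψφ (hφ _ (by linarith)) hv
      (fun x hx hcx => hdini x hx (by linarith))
      (ha.trans_lt (max_lt_max (hψ_mono (by linarith)) (by linarith))) t ht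
  have hlim : Tendsto (fun δ => max (ψ (K + δ - t)) (c + δ)) (𝓝[>] 0)
      (𝓝 (max (ψ (K - t)) c)) := by
    have hcont : Continuous fun δ => max (ψ (K + δ - t)) (c + δ) := by fun_prop
    simpa using (hcont.tendsto 0).mono_left nhdsWithin_le_nhds
  exact ge_of_tendsto hlim (eventually_nhdsWithin_of_forall hδ)

end Barrier

theorem leftLim_le_of_tendsto {v W : ℝ → ℝ} {b L : ℝ} (hL : Tendsto v (𝓝[<] b) (𝓝 L))
    (hW : ContinuousAt W b) (hle : ∀ᶠ s in 𝓝[<] b, v s ≤ W s) :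
    Function.leftLim v b ≤ W b := by
  rw [leftLim_eq_of_tendsto hL]
  exact le_of_tendsto_of_tendsto hL (hW.tendsto.mono_left nhdsWithin_le_nhds) hle

namespace IsImpulseSeq

variable {t₀ : ℝ} {τ : ℕ → ℝ}

theorem le (hτ : IsImpulseSeq t₀ τ) (i : ℕ) : t₀ ≤ τ i :=
  hτ.1 ▸ hτ.2.1.monotone (Nat.zero_le i)

theorem notMem_impulseSet (hτ : IsImpulseSeq t₀ τ) {i : ℕ} {x : ℝ}
    (hx : x ∈ Ioo (τ i) (τ (i + 1))) : x ∉ impulseSet τ := by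
  rintro ⟨j, -, rfl⟩
  have h₁ := hτ.2.1.lt_iff_lt.1 hx.1
  have h₂ := hτ.2.1.lt_iff_lt.1 hx.2
  omega

theorem exists_mem_Ico (hτ : IsImpulseSeq t₀ τ) {t : ℝ} (ht : t₀ ≤ t) :
    ∃ i, t ∈ Ico (τ i) (τ (i + 1)) := by
  have hunion := iUnion_Ico_map_succ_eq_Ici (fun i => hτ.2.1.monotone bot_le)
    (not_bddAbove_of_tendsto_atTop hτ.2.2)
  have ht' : t ∈ Ici (τ ⊥) := by simpa [hτ.1] using ht
  obtain ⟨i, hi⟩ := mem_iUnion.1 (hunion ▸ ht')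
  exact ⟨i, by simpa using hi⟩

end IsImpulseSeq

namespace ImpulsiveRegular

variable {t₀ : ℝ} {τ : ℕ → ℝ} {v : ℝ → ℝ}

theorem continuousOn_Icc (hτ : IsImpulseSeq t₀ τ) (hv : ImpulsiveRegular t₀ τ v) {i : ℕ}
    {t : ℝ} (ht : t < τ (i + 1)) : ContinuousOn v (Icc (τ i) t) := by
  intro z hz
  rcases hz.1.eq_or_lt with rfl | hlt
  · exact (hv.1 _ (hτ.le i)).mono fun w hw => hw.1
  · exact (hv.2.1 z ((hτ.le i).trans hz.1) (hτ.notMem_impulseSet ⟨hlt, hz.2.trans_lt ht⟩)).mono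
      fun w hw => (hτ.le i).trans hw.1

theorem le_of_forall_Ico (hτ : IsImpulseSeq t₀ τ) (hv : ImpulsiveRegular t₀ τ v)
    {W : ℝ → ℝ} {χ c : ℝ} (hW : Continuous W) (hcW : ∀ t, c ≤ W t)
    (hflow : ∀ i, v (τ i) ≤ W (τ i) → ∀ t ∈ Ico (τ i) (τ (i + 1)), v t ≤ W t)
    (hjump : ∀ i : ℕ, 1 ≤ i → χ ≤ Function.leftLim v (τ i) → v (τ i) ≤ Function.leftLim v (τ i))
    (hreset : ∀ i : ℕ, 1 ≤ i → Function.leftLim v (τ i) < χ → v (τ i) ≤ c)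
    (h₀ : v t₀ ≤ W t₀) : ∀ t, t₀ ≤ t → v t ≤ W t := by
  have himpulse : ∀ i, v (τ i) ≤ W (τ i) := by
    intro i
    induction i with
    | zero => rwa [hτ.1]
    | succ i ih =>
      obtain ⟨L, hL⟩ := hv.2.2 (i + 1) (by omega)
      have hleft : Function.leftLim v (τ (i + 1)) ≤ W (τ (i + 1)) :=
        leftLim_le_of_tendsto hL hW.continuousAt <| by
          filter_upwards [Ioo_mem_nhdsLT (hτ.2.1 (Nat.lt_succ_self i))] with s hs
          exact hflow i ih s ⟨hs.1.le, hs.2⟩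
      rcases le_or_gt χ (Function.leftLim v (τ (i + 1))) with h | h
      · exact (hjump _ (by omega) h).trans hleft
      · exact (hreset _ (by omega) h).trans (hcW _)
  intro t ht
  obtain ⟨i, hi⟩ := hτ.exists_mem_Ico ht
  exact hflow i (himpulse i) t hi

end ImpulsiveRegular

theorem ImpulsiveRegular.le_max_logFlow {t₀ χ c m : ℝ} {τ : ℕ → ℝ} {v φ ψ' : ℝ → ℝ}
    (e : ℝ ≃o ℝ) (hψ : ∀ y, HasDerivAt (fun y => Real.exp (e.symm y)) (ψ' y) y)
    (hψφ : ∀ y, ψ' y < φ (Real.exp (e.symm y))) (hφ : ∀ u, 0 < u → 0 < φ u)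
    (hτ : IsImpulseSeq t₀ τ) (hv : ImpulsiveRegular t₀ τ v) (hχc : χ ≤ c) (hc : 0 ≤ c)
    (hdini : ∀ t, t₀ ≤ t → t ∉ impulseSet τ → χ ≤ v t →
      DiniUpper v t ≤ ((-φ (v t) : ℝ) : EReal))
    (hjump : ∀ i : ℕ, 1 ≤ i → χ ≤ Function.leftLim v (τ i) → v (τ i) ≤ Function.leftLim v (τ i))
    (hreset : ∀ i : ℕ, 1 ≤ i → Function.leftLim v (τ i) < χ → v (τ i) ≤ c)
    (hm : 0 ≤ m) (h₀ : v t₀ ≤ max m c) :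
    ∀ t, t₀ ≤ t → v t ≤ max (logFlow e m (t - t₀)) c := by
  have hpos : ∀ m, 0 < m → v t₀ ≤ max m c →
      ∀ t, t₀ ≤ t → v t ≤ max (logFlow e m (t - t₀)) c := by
    intro m hm h₀
    set ψ := fun y => Real.exp (e.symm y)
    set K := e (Real.log m) + t₀
    have hflow : ∀ t, logFlow e m (t - t₀) = ψ (K - t) := fun t => by
      rw [logFlow.of_pos e hm, sub_sub_eq_add_sub]
    simp only [hflow]
    refine hv.le_of_forall_Ico hτ (W := fun t => max (ψ (K - t)) c) (by fun_prop)
      (fun _ => le_max_right _ _) ?_ hjump hreset (by simpa [ψ, K, Real.exp_log hm] using h₀)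
    intro i hi t ht
    exact le_max_barrier hψ hψφ (Real.exp_strictMono.comp e.symm.strictMono) hφ hc
      (hv.continuousOn_Icc hτ ht.2)
      (fun x hx hcx => hdini x ((hτ.le i).trans hx.1.le)
        (hτ.notMem_impulseSet ⟨hx.1, hx.2.trans ht.2⟩) (hχc.trans hcx))
      hi t ⟨ht.1, le_rfl⟩
  intro t ht
  rcases hm.eq_or_lt with rfl | hm
  · have hlim : Tendsto (fun m => max (logFlow e m (t - t₀)) c) (𝓝[>] 0)
        (𝓝 (max (logFlow e 0 (t - t₀)) c)) := by
      simpa [logFlow] using (logFlow.tendsto_nhdsGT_zero e (t - t₀)).max tendsto_const_nhds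
    refine ge_of_tendsto hlim (eventually_nhdsWithin_of_forall fun m' (hm' : 0 < m') => ?_)
    exact hpos m' hm' (h₀.trans (max_le_max hm'.le le_rfl)) t ht
  · exact hpos m hm h₀ t ht

universe u

/-- a time-varying ISS-Lyapunov function along a trajectory implies the ISS
estimate, with `β ∈ 𝒦ℒ` and `γ ∈ 𝒦∞` depending only on `α₁, α₂, α₃, χ, φ`. -/
theorem directLyapunovISS
    (α₁ α₂ χ α₃ φ : ℝ → ℝ)
    (hα₁ : ClassKInf α₁) (hα₂ : ClassKInf α₂) (hχ : ClassKInf χ)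
    (hα₃ : ClassK α₃) (hφ : ClassP φ) :
    ∃ β : ℝ → ℝ → ℝ, ∃ γ : ℝ → ℝ, ClassKL β ∧ ClassKInf γ ∧
      ∀ (X : Type u) [NormedAddCommGroup X] [NormedSpace ℝ X],
      ∀ (t₀ : ℝ) (τ : ℕ → ℝ), IsImpulseSeq t₀ τ →
      ∀ r : ℝ, 0 ≤ r →
      ∀ (x : ℝ → X) (V : ℝ → X → ℝ),
      (∀ t, t₀ ≤ t → ∀ y : X, α₁ ‖y‖ ≤ V t y ∧ V t y ≤ α₂ ‖y‖) →
      ImpulsiveRegular t₀ τ (fun t => V t (x t)) →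
      (∀ t, t₀ ≤ t → t ∉ impulseSet τ → χ r ≤ V t (x t) →
        DiniUpper (fun s => V s (x s)) t ≤ (((-φ (V t (x t))) : ℝ) : EReal)) →
      (∀ i : ℕ, 1 ≤ i → χ r ≤ Function.leftLim (fun s => V s (x s)) (τ i) →
        V (τ i) (x (τ i)) ≤ Function.leftLim (fun s => V s (x s)) (τ i)) →
      (∀ i : ℕ, 1 ≤ i → Function.leftLim (fun s => V s (x s)) (τ i) < χ r →
        V (τ i) (x (τ i)) ≤ α₃ r) →
      ∀ t, t₀ ≤ t → ‖x t‖ ≤ β ‖x t₀‖ (t - t₀) + γ r := by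
  obtain ⟨e₁, he₁⟩ := hα₁.exists_orderIso
  obtain ⟨e, ψ', hψ, hψφ⟩ :=
    exists_orderIso_hasDerivAt_exp_symm_lt (hφ.1.mono Ioi_subset_Ici_self) hφ.2.2
  have hg : ClassKInf e₁.symm :=
    e₁.symm.classKInf (by rw [e₁.symm_apply_eq, he₁ self_mem_Ici, hα₁.1.2.2])
  set β : ℝ → ℝ → ℝ := fun ρ s => e₁.symm (logFlow e (α₂ ρ) s)
  set γ : ℝ → ℝ := fun r => e₁.symm (max (χ r) (α₃ r))
  have hβ : ClassKL β := ((logFlow.classKL e).comp_right hα₂.1).comp_left hg.1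
  have hγ : ClassKInf γ := hg.comp (hχ.sup hα₃)
  refine ⟨β, γ, hβ, hγ, ?_⟩
  intro X _ _ t₀ τ hτ r hr x V hV hv hdini hjump hreset t ht
  have hv_le : V t (x t) ≤ max (logFlow e (α₂ ‖x t₀‖) (t - t₀)) (max (χ r) (α₃ r)) :=
    hv.le_max_logFlow e hψ hψφ hφ.2.2 hτ (le_max_left _ _)
      ((hχ.1.nonneg hr).trans (le_max_left _ _)) hdini hjump
      (fun i hi h => (hreset i hi h).trans (le_max_right _ _)) (hα₂.1.nonneg (norm_nonneg _))
      ((hV t₀ le_rfl (x t₀)).2.trans (le_max_left _ _)) t ht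
  calc ‖x t‖ = e₁.symm (α₁ ‖x t‖) := by rw [← he₁ (norm_nonneg _), e₁.symm_apply_apply]
    _ ≤ max (β ‖x t₀‖ (t - t₀)) (γ r) :=
      e₁.symm.monotone.map_max ▸ e₁.symm.monotone ((hV t ht (x t)).1.trans hv_le)
    _ ≤ β ‖x t₀‖ (t - t₀) + γ r :=
      max_le_add_of_nonneg ((hβ.1 _ (sub_nonneg.2 ht)).nonneg (norm_nonneg _)) (hγ.1.nonneg hr)
end
end

section
/- Let m ∈ ℝ and let F: [0,∞) → [m,∞) be a continuous, strictly increasing bijection (so F(0) = m and F(q) → ∞ as q → ∞), with inverse F⁻¹: [m,∞) → [0,∞). Define β̃: [0,∞) × [0,∞) → [0,∞) by β̃(0,s) := 0 and, for r > 0, β̃(r,s) := F⁻¹( F(r) − (F(r) − m)(1 − e^{−s/(F(r)−m)}) ). Then: (a) β̃(r,s) ≥ F⁻¹(max{F(r) − s, m}) for all r > 0 and s ≥ 0; (b) β̃ is of class 𝒦ℒ. -/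
/-!
Writing `c = F r - m > 0`, the argument of `F⁻¹` in `β̃(r, s)` is `m + c e^{-s/c}`. Since
`e^x ≥ 1 + x`, this is at least `m + c - s = F r - s`, which gives the lower bound. The map
`(c, s) ↦ c e^{-s/c}` is continuous and strictly increasing in `c ≥ 0` (with value `0` at `c = 0`),
and decreases to `0` in `s`; composing with the continuous strictly increasing `F` and `F⁻¹`
(the latter continuous because it is monotone with an interval as image) yields the 𝒦ℒ property.
-/

open Filter Topology Set MeasureTheory

noncomputable section

theorem StrictMonoOn.strictMonoOn_of_rightInvOn {α β : Type*} [LinearOrder α] [LinearOrder β]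
    {f : α → β} {g : β → α} {s : Set α} {t : Set β} (hf : StrictMonoOn f s) (hg : MapsTo g t s)
    (hfg : RightInvOn g f t) : StrictMonoOn g t := fun x hx y hy hxy =>
  (hf.lt_iff_lt (hg hx) (hg hy)).1 (by rwa [hfg hx, hfg hy])

theorem MonotoneOn.apply_eq_of_mapsTo_of_surjOn {α β : Type*} [Preorder α] [PartialOrder β]
    {f : α → β} {a : α} {b : β} (hf : MonotoneOn f (Ici a)) (hmaps : MapsTo f (Ici a) (Ici b))
    (hsurj : SurjOn f (Ici a) (Ici b)) : f a = b := by
  obtain ⟨x, hx, hfx⟩ := hsurj (self_mem_Ici (a := b))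
  exact le_antisymm (hfx ▸ hf self_mem_Ici hx hx) (hmaps self_mem_Ici)

theorem StrictMonoOn.continuousOn_Ici_of_surjOn {α β : Type*} [LinearOrder α] [TopologicalSpace α]
    [OrderTopology α] [LinearOrder β] [TopologicalSpace β] [OrderTopology β] [DenselyOrdered β]
    {f : α → β} {a : α} {b : β} (hf : StrictMonoOn f (Ici a)) (hmaps : MapsTo f (Ici a) (Ici b))
    (hsurj : SurjOn f (Ici a) (Ici b)) : ContinuousOn f (Ici a) := by
  have himage : f '' Ici a = Ici b := hsurj.image_eq_of_mapsTo hmaps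
  intro x hx
  rcases (mem_Ici.1 hx).eq_or_lt with rfl | hax
  · refine hf.continuousWithinAt_right_of_image_mem_nhdsWithin self_mem_nhdsWithin ?_
    rw [himage]
    exact mem_of_superset self_mem_nhdsWithin (Ici_subset_Ici.2 (hmaps hx))
  · refine (hf.continuousAt_of_image_mem_nhds (Ici_mem_nhds hax) ?_).continuousWithinAt
    rw [himage]
    exact Ici_mem_nhds ((hmaps self_mem_Ici).trans_lt (hf self_mem_Ici hx hax))

theorem ClassK.congr {γ γ' : ℝ → ℝ} (h : ClassK γ) (heq : EqOn γ γ' (Ici 0)) : ClassK γ' :=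
  ⟨h.1.congr heq.symm, h.2.1.congr heq, heq self_mem_Ici ▸ h.2.2⟩

theorem ClassKL.congr {β β' : ℝ → ℝ → ℝ} (h : ClassKL β)
    (heq : ∀ r, 0 ≤ r → ∀ s, 0 ≤ s → β r s = β' r s) : ClassKL β' := by
  refine ⟨fun s hs => (h.1 s hs).congr fun r hr => heq r hr s hs, fun r hr => ⟨?_, ?_⟩⟩
  · exact (h.2 r hr).1.congr (heq r hr)
  · exact (h.2 r hr).2.congr' (eventually_atTop.2 ⟨0, heq r hr⟩)

/-- `c e^{-s/c}`. At `c = 0` the convention `x / 0 = 0` gives the value `0`, which is the limit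
as `c → 0⁺` when `s ≥ 0`; this lets one formula cover `β̃(0, s) = 0` as well. -/
def expDecay (c s : ℝ) : ℝ := c * Real.exp (-s / c)

namespace expDecay

variable {c s : ℝ}

@[simp] theorem zero_left (s : ℝ) : expDecay 0 s = 0 := zero_mul _

@[simp] theorem zero_right (c : ℝ) : expDecay c 0 = c := by simp [expDecay]

theorem pos (hc : 0 < c) (s : ℝ) : 0 < expDecay c s := mul_pos hc (Real.exp_pos _)

theorem nonneg (hc : 0 ≤ c) (s : ℝ) : 0 ≤ expDecay c s := mul_nonneg hc (Real.exp_pos _).le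

theorem sub_le (hc : 0 < c) (s : ℝ) : c - s ≤ expDecay c s :=
  calc c - s = c * (-s / c + 1) := by field_simp; ring
    _ ≤ expDecay c s := mul_le_mul_of_nonneg_left (Real.add_one_le_exp _) hc.le

theorem antitone (hc : 0 ≤ c) : Antitone (expDecay c) := fun _ _ h =>
  mul_le_mul_of_nonneg_left (Real.exp_le_exp.2 (div_le_div_of_nonneg_right (neg_le_neg h) hc)) hc

theorem le_self (hc : 0 ≤ c) (hs : 0 ≤ s) : expDecay c s ≤ c := by
  simpa using antitone hc hs

theorem tendsto_atTop (hc : 0 ≤ c) : Tendsto (expDecay c) atTop (𝓝 0) := by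
  rcases hc.eq_or_lt with rfl | hc
  · exact tendsto_const_nhds.congr fun s => (zero_left s).symm
  · have hexp : Tendsto (fun s => Real.exp (-s / c)) atTop (𝓝 0) :=
      Real.tendsto_exp_atBot.comp (tendsto_neg_atTop_atBot.atBot_div_const hc)
    rw [← mul_zero c]
    exact hexp.const_mul c

theorem strictMonoOn_left (hs : 0 ≤ s) : StrictMonoOn (expDecay · s) (Ici 0) := by
  intro c₁ hc₁ c₂ _ h
  rcases (mem_Ici.1 hc₁).eq_or_lt with rfl | hc₁
  · simpa using pos h s
  · have hexp : Real.exp (-s / c₁) ≤ Real.exp (-s / c₂) := by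
      rw [Real.exp_le_exp, neg_div, neg_div, neg_le_neg_iff]
      exact div_le_div_of_nonneg_left hs hc₁ h.le
    exact mul_lt_mul h hexp (Real.exp_pos _) (hc₁.trans h).le

theorem continuousOn_left (hs : 0 ≤ s) : ContinuousOn (expDecay · s) (Ici 0) := by
  intro c hc
  rcases (mem_Ici.1 hc).eq_or_lt with rfl | hc
  · have hlim : Tendsto (expDecay · s) (𝓝[Ici 0] 0) (𝓝 0) :=
      squeeze_zero' (eventually_nhdsWithin_of_forall fun c hc => nonneg hc s)
        (eventually_nhdsWithin_of_forall fun c hc => le_self hc hs) nhdsWithin_le_nhds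
    simpa [ContinuousWithinAt] using hlim
  · exact (continuousAt_id.mul (Real.continuous_exp.continuousAt.comp
      (continuousAt_const.div continuousAt_id hc.ne'))).continuousWithinAt

end expDecay

theorem classKL_finv_expDecay {m : ℝ} {F Finv : ℝ → ℝ} (hFc : ContinuousOn F (Ici 0))
    (hFm : StrictMonoOn F (Ici 0)) (hF0 : F 0 = m) (hFinv : StrictMonoOn Finv (Ici m))
    (hFinvc : ContinuousOn Finv (Ici m)) (hFinvm : Finv m = 0) :
    ClassKL fun r s => Finv (m + expDecay (F r - m) s) := by
  have hFsub : MapsTo (F · - m) (Ici 0) (Ici 0) := fun r hr =>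
    sub_nonneg.2 (hF0 ▸ hFm.monotoneOn self_mem_Ici hr hr)
  have hmaps : ∀ r ∈ Ici 0, ∀ s, m + expDecay (F r - m) s ∈ Ici m := fun r hr s =>
    le_add_of_nonneg_right (expDecay.nonneg (hFsub hr) s)
  refine ⟨fun s hs => ⟨?_, ?_, by simp [hF0, hFinvm]⟩, fun r hr => ⟨?_, ?_⟩⟩
  · exact hFinvc.comp (continuousOn_const.add ((expDecay.continuousOn_left hs).comp
      (hFc.sub continuousOn_const) hFsub)) (fun r hr => hmaps r hr s)
  · refine hFinv.comp (fun r₁ hr₁ r₂ hr₂ h => add_lt_add_right ?_ m) (fun r hr => hmaps r hr s)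
    exact expDecay.strictMonoOn_left hs (hFsub hr₁) (hFsub hr₂) (sub_lt_sub_right (hFm hr₁ hr₂ h) m)
  · exact fun s₁ _ s₂ _ h => hFinv.monotoneOn (hmaps r hr s₂) (hmaps r hr s₁)
      (add_le_add_right (expDecay.antitone (hFsub hr) h) m)
  · have hinner : Tendsto (fun s => m + expDecay (F r - m) s) atTop (𝓝[Ici m] m) :=
      tendsto_nhdsWithin_iff.2 ⟨by simpa using (expDecay.tendsto_atTop (hFsub hr)).const_add m,
        Eventually.of_forall (hmaps r hr)⟩
    rw [← hFinvm]
    exact (hFinvc m self_mem_Ici).tendsto.comp hinner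

/-- the relaxed bound `β̃` built from a continuous strictly increasing bijection
`F : [0,∞) → [m,∞)` dominates `F⁻¹(max{F(r) − s, m})` and is of class 𝒦ℒ. -/
theorem relaxedKLBound
    (m : ℝ) (F Finv : ℝ → ℝ)
    (hFc : ContinuousOn F (Set.Ici 0))
    (hFm : StrictMonoOn F (Set.Ici 0))
    (hFbij : Set.BijOn F (Set.Ici 0) (Set.Ici m))
    (hFinvF : ∀ q, 0 ≤ q → Finv (F q) = q)
    (hFFinv : ∀ p, m ≤ p → F (Finv p) = p)
    (hFinvmem : ∀ p, m ≤ p → 0 ≤ Finv p)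
    (βt : ℝ → ℝ → ℝ)
    (hβt0 : ∀ s, βt 0 s = 0)
    (hβtdef : ∀ r, 0 < r → ∀ s,
      βt r s = Finv (F r - (F r - m) * (1 - Real.exp (-s / (F r - m))))) :
    (∀ r, 0 < r → ∀ s, 0 ≤ s → Finv (max (F r - s) m) ≤ βt r s) ∧ ClassKL βt := by
  have hF0 : F 0 = m := hFm.monotoneOn.apply_eq_of_mapsTo_of_surjOn hFbij.mapsTo hFbij.surjOn
  have hFinvm : Finv m = 0 := hF0 ▸ hFinvF 0 le_rfl
  have hFinv : StrictMonoOn Finv (Ici m) := hFm.strictMonoOn_of_rightInvOn hFinvmem hFFinv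
  have hFinvc : ContinuousOn Finv (Ici m) :=
    hFinv.continuousOn_Ici_of_surjOn hFinvmem (LeftInvOn.surjOn hFinvF hFbij.mapsTo)
  have hβ : ∀ r, 0 ≤ r → ∀ s, Finv (m + expDecay (F r - m) s) = βt r s := by
    intro r hr s
    rcases hr.eq_or_lt with rfl | hr
    · simp [hβt0, hF0, hFinvm]
    · rw [hβtdef r hr s, expDecay]
      congr 1
      ring
  refine ⟨fun r hr s hs => ?_, (classKL_finv_expDecay hFc hFm hF0 hFinv hFinvc hFinvm).congr
    fun r hr s _ => hβ r hr s⟩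
  have hc : 0 < F r - m := sub_pos.2 (hF0 ▸ hFm self_mem_Ici hr.le hr)
  have hm : m ≤ m + expDecay (F r - m) s := le_add_of_nonneg_right (expDecay.nonneg hc.le s)
  rw [← hβ r hr.le s]
  exact hFinv.monotoneOn (mem_Ici.2 (le_max_right _ _)) hm
    (max_le (by linarith [expDecay.sub_le hc s]) hm)
end
end

section
/- Let ρ ∈ 𝒫, α ∈ 𝒦∞ with α(a) ≥ a for all a, and θ > δ > 0 with ∫_a^{α(a)} ds/ρ(s) ≤ θ − δ for all a > 0. Let κ ∈ 𝒦∞ be continuously differentiable with κ(s) ≤ min{α⁻¹(s), s} for all s ≥ 0 and κ' of class 𝒫. Set F̃(q) := ∫₁^q ds/ρ(s) for q > 0, m := lim_{q→0⁺} F̃(q) ∈ [−∞,∞), F̃(0) := m, and define G(p) := F̃⁻¹(p) for p in F̃((0,∞)) and G(p) := 0 for p ≤ m. Let ψ₁, ψ₂, η ∈ 𝒦∞, ψ₃ ∈ 𝒦, X a real normed space, t₀ ∈ ℝ, (tᵢ) an impulse time sequence with t_{i+1} − tᵢ ≥ θ for all i ≥ 0, and r ≥ 0. Let V_cand: X → [0,∞)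 be continuous with ψ₁(‖y‖) ≤ V_cand(y) ≤ ψ₂(‖y‖), and let x: [t₀,∞) → X be such that w(t) := V_cand(x(t)) is impulsive-regular and satisfies: D⁺w(t) ≤ −ρ(w(t)) at non-impulse times with w(t) ≥ η(r); w(tᵢ) ≤ α(w(tᵢ⁻)) at impulse times with w(tᵢ⁻) ≥ η(r); and w(tᵢ) ≤ ψ₃(r) at impulse times with w(tᵢ⁻) < η(r). Define, for t ∈ [tᵢ, t_{i+1}) (i ≥ 0) and y ∈ X: v₁(t,y) := G( F̃(V_cand(y)) − ((t_{i+1} − t)/(t_{i+1} − tᵢ))(θ − δ) ), v₂(t,y) := κ(V_cand(y)), and V(t,y) := max{v₁(t,y), v₂(t,y)}. Then, with χ := α ∘ η: (i) κ(ψ₁(‖y‖)) ≤ V(t,y) ≤ ψ₂(‖y‖) for all t ≥ t₀ and y ∈ X; (ii) there exists φ ∈ 𝒫, depending only on ρ, κ, δ and θ, such that D⁺[V(t,x(t))] ≤ −φ(V(t,x(t))) at every non-impulse time t with V(t,x(t)) ≥ χ(r), and V(tᵢ, x(tᵢ)) ≤ V(tᵢ⁻, x(tᵢ⁻)) at every impulse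 time with V(tᵢ⁻, x(tᵢ⁻)) ≥ χ(r) (left limits taken of the map t ↦ V(t,x(t)), which is impulsive-regular); (iii) V(tᵢ, x(tᵢ)) ≤ max{ψ₃(r), χ(r)} at every impulse time with V(tᵢ⁻, x(tᵢ⁻)) < χ(r). -/
/-!
Along the flow `V_cand` decreases at rate `ρ(V_cand)`, so `F̃ ∘ V_cand` decreases at rate at least
`1`; the shift `λ(t) = (t_{i+1} - t) / (t_{i+1} - t_i) · (θ - δ)` decreases at rate at most
`1 - δ / θ` because consecutive impulses are at least `θ` apart. Hence `F̃(V_cand) - λ` decreases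
at rate `δ / θ` and `v₁ = G(F̃(V_cand) - λ)` at rate `(δ / θ) ρ(v₁)`, while `v₂ = κ(V_cand)`
decreases at rate `κ'(V_cand) ρ(V_cand)`; the decay of `max {v₁, v₂}` is that of the active branch.
Just before an impulse `λ = 0`, so `V = V_cand` there (as `κ(s) ≤ s`) and the two left limits
agree. At the impulse `λ` is reset to `θ - δ`, which absorbs the growth
`F̃(α(a)) - F̃(a) ≤ θ - δ` permitted by `V_cand(t_i) ≤ α(V_cand(t_i⁻))`, while `κ ≤ α⁻¹` gives
`v₂(t_i) ≤ V_cand(t_i⁻)`.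
-/

open Filter Topology Set MeasureTheory

noncomputable section

section Dini

variable {v f g W : ℝ → ℝ} {t c : ℝ}

theorem diniUpper_eq_limsup_nhdsGT :
    DiniUpper v t = limsup (fun u => (((v u - v t) / (u - t) : ℝ) : EReal)) (𝓝[>] t) := by
  rw [DiniUpper, ← add_zero t, ← Filter.map_add_left_nhdsGT, limsup, limsup, map_map, add_zero]
  simp [Function.comp_def]

theorem diniUpper_le_iff :
    DiniUpper v t ≤ c ↔ ∀ c' > c, ∀ᶠ u in 𝓝[>] t, v u - v t ≤ c' * (u - t) := by
  rw [diniUpper_eq_limsup_nhdsGT]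
  constructor
  · intro h c' hc'
    have hlt : limsup (fun u => (((v u - v t) / (u - t) : ℝ) : EReal)) (𝓝[>] t) < c' :=
      h.trans_lt (EReal.coe_lt_coe_iff.2 hc')
    filter_upwards [eventually_lt_of_limsup_lt hlt, self_mem_nhdsWithin] with u hu htu
    exact ((div_le_iff₀ (sub_pos.2 htu)).1 (EReal.coe_lt_coe_iff.1 hu).le)
  · intro h
    refine EReal.le_of_forall_lt_iff_le.1 fun c' hc' => limsup_le_of_le (by isBoundedDefault) ?_
    filter_upwards [h c' (EReal.coe_lt_coe_iff.1 hc'), self_mem_nhdsWithin] with u hu htu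
    exact EReal.coe_le_coe_iff.2 ((div_le_iff₀ (sub_pos.2 htu)).2 hu)

theorem diniUpper_mono (h : ∀ᶠ u in 𝓝[>] t, f u - f t ≤ g u - g t) :
    DiniUpper f t ≤ DiniUpper g t := by
  simp only [diniUpper_eq_limsup_nhdsGT]
  refine limsup_le_limsup ?_ (by isBoundedDefault) (by isBoundedDefault)
  filter_upwards [h, self_mem_nhdsWithin] with u hu htu
  exact EReal.coe_le_coe_iff.2 (div_le_div_of_nonneg_right hu (sub_pos.2 htu).le)

theorem diniUpper_add_mul_le (h : DiniUpper f t ≤ c) (k : ℝ) :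
    DiniUpper (fun u => f u + k * u) t ≤ ↑(c + k) := by
  refine diniUpper_le_iff.2 fun c' hc' => ?_
  filter_upwards [diniUpper_le_iff.1 h (c' - k) (by linarith)] with u hu
  linarith

theorem diniUpper_comp_le {B : ℝ} (hB : 0 < B) (hc : 0 < c)
    (hW : ContinuousWithinAt W (Ioi t) t) (hDW : DiniUpper W t ≤ ↑(-B))
    (hg : HasDerivAt g c (W t)) : DiniUpper (g ∘ W) t ≤ ↑(-(c * B)) := by
  refine diniUpper_le_iff.2 fun c' hc' => ?_
  have hprod : Tendsto (fun x => (c - x) * (B - x)) (𝓝[>] 0) (𝓝 (c * B)) := by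
    have : Continuous fun x : ℝ => (c - x) * (B - x) := by fun_prop
    simpa using (this.tendsto 0).mono_left nhdsWithin_le_nhds
  -- a margin `x`: eventually `W` drops at rate `B - x` and `g` has slope at least `c - x`
  obtain ⟨x, hx : 0 < x, hprodx, hxc, hxB⟩ := ((eventually_mem_nhdsWithin (a := (0:ℝ)) (s := Ioi 0)).and
    ((hprod.eventually (lt_mem_nhds (neg_lt.1 hc'))).and
    (nhdsWithin_le_nhds ((eventually_lt_nhds hc).and (eventually_lt_nhds hB))))).exists
  have hlin := hW.tendsto.eventually ((hasDerivAt_iff_isLittleO.1 hg).def hx)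
  filter_upwards [hlin, diniUpper_le_iff.1 hDW (-(B - x)) (by linarith),
    self_mem_nhdsWithin] with u hu hWu htu
  have htu : 0 < u - t := sub_pos.2 htu
  have hdrop : W u - W t ≤ 0 := hWu.trans (by nlinarith)
  simp only [Real.norm_eq_abs, smul_eq_mul, abs_of_nonpos hdrop] at hu
  have hu' := (abs_le.1 hu).2
  simp only [Function.comp_apply]
  nlinarith

theorem eventually_sub_le_mul_of_diniUpper_le {M c' : ℝ} (hf : ContinuousWithinAt f (Ioi t) t)
    (hM : f t ≤ M) (hf' : f t = M → DiniUpper f t ≤ c) (hc' : c < c') :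
    ∀ᶠ u in 𝓝[>] t, f u - M ≤ c' * (u - t) := by
  rcases hM.eq_or_lt with rfl | hM
  · exact diniUpper_le_iff.1 (hf' rfl) c' hc'
  have hlim : Tendsto (fun u => f u - M - c' * (u - t)) (𝓝[>] t) (𝓝 (f t - M - c' * (t - t))) :=
    (hf.tendsto.sub_const M).sub
      (((continuous_const.mul (continuous_id.sub continuous_const)).tendsto t).mono_left
        nhdsWithin_le_nhds)
  rw [sub_self, mul_zero, sub_zero] at hlim
  filter_upwards [hlim.eventually (gt_mem_nhds (sub_neg.2 hM))] with u hu
  linarith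

theorem diniUpper_max_le (hf : ContinuousWithinAt f (Ioi t) t)
    (hg : ContinuousWithinAt g (Ioi t) t) (hf' : g t ≤ f t → DiniUpper f t ≤ c)
    (hg' : f t ≤ g t → DiniUpper g t ≤ c) : DiniUpper (fun u => max (f u) (g u)) t ≤ c := by
  refine diniUpper_le_iff.2 fun c' hc' => ?_
  filter_upwards [eventually_sub_le_mul_of_diniUpper_le hf (le_max_left _ _)
      (fun h => hf' (max_eq_left_iff.1 h.symm)) hc',
    eventually_sub_le_mul_of_diniUpper_le hg (le_max_right _ _)
      (fun h => hg' (max_eq_right_iff.1 h.symm)) hc'] with u hfu hgu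
  rw [sub_le_iff_le_add]
  exact max_le (by linarith) (by linarith)

end Dini

/-- The paper's `G`: `F̃⁻¹` on the range of `F̃` and `0` on `(-∞, m]`, where `m = inf F̃`. -/
structure IsZeroExtendedInverse (F G : ℝ → ℝ) : Prop where
  strictMonoOn : StrictMonoOn F (Ioi 0)
  continuousOn : ContinuousOn F (Ioi 0)
  apply_apply : ∀ q, 0 < q → G (F q) = q
  eq_zero_of_forall_le : ∀ p, (∀ q, 0 < q → p ≤ F q) → G p = 0

namespace IsZeroExtendedInverse

variable {F G : ℝ → ℝ} {p a b c : ℝ}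

theorem forall_le_or_exists_eq (hG : IsZeroExtendedInverse F G) (hc : 0 < c) (hp : p ≤ F c) :
    (∀ q, 0 < q → p ≤ F q) ∨ ∃ q ∈ Ioc 0 c, F q = p := by
  by_cases h : ∀ q, 0 < q → p ≤ F q
  · exact Or.inl h
  push Not at h
  obtain ⟨a, ha, hap⟩ := h
  have hac : a ≤ c := ((hG.strictMonoOn.lt_iff_lt ha hc).1 (hap.trans_le hp)).le
  obtain ⟨q, hq, rfl⟩ := intermediate_value_Icc hac
    (hG.continuousOn.mono fun x hx => ha.trans_le hx.1) ⟨hap.le, hp⟩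
  exact Or.inr ⟨q, ⟨ha.trans_le hq.1, hq.2⟩, rfl⟩

theorem mem_Icc (hG : IsZeroExtendedInverse F G) (hc : 0 < c) (hp : p ≤ F c) :
    G p ∈ Icc 0 c := by
  rcases hG.forall_le_or_exists_eq hc hp with h | ⟨q, hq, rfl⟩
  · rw [hG.eq_zero_of_forall_le p h]
    exact ⟨le_rfl, hc.le⟩
  · rw [hG.apply_apply q hq.1]
    exact ⟨hq.1.le, hq.2⟩

theorem le_apply (hG : IsZeroExtendedInverse F G) (ha : 0 < a) (hap : F a ≤ p) (hc : 0 < c)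
    (hp : p ≤ F c) : a ≤ G p := by
  rcases hG.forall_le_or_exists_eq hc hp with h | ⟨q, hq, rfl⟩
  · have := hG.strictMonoOn (half_pos ha) ha (half_lt_self ha)
    linarith [h (a / 2) (half_pos ha)]
  · rw [hG.apply_apply q hq.1]
    exact (hG.strictMonoOn.le_iff_le ha hq.1).1 hap

theorem apply_apply_of_pos (hG : IsZeroExtendedInverse F G) (hc : 0 < c) (hp : p ≤ F c)
    (hpos : 0 < G p) : F (G p) = p := by
  rcases hG.forall_le_or_exists_eq hc hp with h | ⟨q, hq, rfl⟩
  · exact absurd (hG.eq_zero_of_forall_le p h) hpos.ne'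
  · rw [hG.apply_apply q hq.1]

theorem lt_apply_add_one (hG : IsZeroExtendedInverse F G) (hc : 0 < c) (hp : p ≤ F c) :
    p < F (c + 1) :=
  hp.trans_lt (hG.strictMonoOn hc (mem_Ioi.2 (by linarith)) (by linarith))

theorem eventually_lt_apply (hG : IsZeroExtendedInverse F G) (hc : 0 < c) (hp : p ≤ F c)
    (ha : a < G p) : ∀ᶠ y in 𝓝 p, a < G y := by
  have hc' : (0 : ℝ) < c + 1 := by linarith
  by_cases ha0 : a < 0
  · filter_upwards [eventually_lt_nhds (hG.lt_apply_add_one hc hp)] with y hy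
    exact ha0.trans_le (hG.mem_Icc hc' hy.le).1
  have hGp : 0 < G p := by linarith
  have ha' : 0 < (a + G p) / 2 := by linarith
  have hFa' : F ((a + G p) / 2) < p := by
    conv_rhs => rw [← hG.apply_apply_of_pos hc hp hGp]
    exact hG.strictMonoOn ha' hGp (by linarith)
  filter_upwards [eventually_lt_nhds (hG.lt_apply_add_one hc hp), eventually_gt_nhds hFa']
    with y hy hy'
  linarith [hG.le_apply ha' hy'.le hc' hy.le]

theorem eventually_apply_lt (hG : IsZeroExtendedInverse F G) (hc : 0 < c) (hp : p ≤ F c)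
    (hb : G p < b) : ∀ᶠ y in 𝓝 p, G y < b := by
  have hGp := (hG.mem_Icc hc hp).1
  have hb' : 0 < (G p + b) / 2 := by linarith
  have hpb' : p < F ((G p + b) / 2) := by
    rcases hG.forall_le_or_exists_eq hc hp with h | ⟨q, hq, rfl⟩
    · exact (h _ (half_pos hb')).trans_lt (hG.strictMonoOn (half_pos hb') hb' (half_lt_self hb'))
    · rw [hG.apply_apply q hq.1] at hb ⊢
      exact hG.strictMonoOn hq.1 (mem_Ioi.2 (by linarith [hq.1])) (by linarith)
  filter_upwards [eventually_lt_nhds hpb'] with y hy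
  linarith [(hG.mem_Icc hb' hy.le).2]

theorem continuousAt (hG : IsZeroExtendedInverse F G) (hc : 0 < c) (hp : p ≤ F c) :
    ContinuousAt G p :=
  tendsto_order.2 ⟨fun _ ha => hG.eventually_lt_apply hc hp ha,
    fun _ hb => hG.eventually_apply_lt hc hp hb⟩

theorem hasDerivAt {f' : ℝ} (hG : IsZeroExtendedInverse F G) (hc : 0 < c) (hp : p ≤ F c)
    (hpos : 0 < G p) (hF : HasDerivAt F f' (G p)) (hf' : f' ≠ 0) : HasDerivAt G f'⁻¹ p := by
  refine hF.of_local_left_inverse (hG.continuousAt hc hp) hf' ?_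
  filter_upwards [eventually_lt_nhds (hG.lt_apply_add_one hc hp),
    hG.eventually_lt_apply hc hp hpos] with y hy hGy
  exact hG.apply_apply_of_pos (by linarith) hy.le hGy

end IsZeroExtendedInverse

section IntegralInverse

variable {ρ F G : ℝ → ℝ} {a b : ℝ}

theorem ClassP.continuousOn_inv (hρ : ClassP ρ) : ContinuousOn (fun s => (ρ s)⁻¹) (Ioi 0) :=
  (hρ.1.mono Ioi_subset_Ici_self).inv₀ fun s hs => (hρ.2.2 s hs).ne'

theorem ClassP.intervalIntegrable_inv (hρ : ClassP ρ) (ha : 0 < a) (hb : 0 < b) :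
    IntervalIntegrable (fun s => (ρ s)⁻¹) volume a b :=
  (hρ.continuousOn_inv.mono fun _ hs => (lt_min ha hb).trans_le hs.1).intervalIntegrable

theorem hasDerivAt_of_eq_integral_inv (hρ : ClassP ρ)
    (hF : ∀ q, F q = ∫ s in (1 : ℝ)..q, (ρ s)⁻¹) (hb : 0 < b) : HasDerivAt F (ρ b)⁻¹ b := by
  rw [funext hF]
  exact intervalIntegral.integral_hasDerivAt_right (hρ.intervalIntegrable_inv one_pos hb)
    (hρ.continuousOn_inv.stronglyMeasurableAtFilter isOpen_Ioi b hb)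
    (hρ.continuousOn_inv.continuousAt (Ioi_mem_nhds hb))

theorem sub_eq_integral_inv (hρ : ClassP ρ) (hF : ∀ q, F q = ∫ s in (1 : ℝ)..q, (ρ s)⁻¹)
    (ha : 0 < a) (hb : 0 < b) : F b - F a = ∫ s in a..b, (ρ s)⁻¹ := by
  rw [hF, hF, intervalIntegral.integral_interval_sub_left
    (hρ.intervalIntegrable_inv one_pos hb) (hρ.intervalIntegrable_inv one_pos ha)]

theorem isZeroExtendedInverse_of_eq_integral_inv (hρ : ClassP ρ)
    (hF : ∀ q, F q = ∫ s in (1 : ℝ)..q, (ρ s)⁻¹) (hG₁ : ∀ q, 0 < q → G (F q) = q)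
    (hG₂ : ∀ p, (∀ q, 0 < q → p ≤ F q) → G p = 0) : IsZeroExtendedInverse F G := by
  have hcont : ContinuousOn F (Ioi 0) := fun q hq =>
    (hasDerivAt_of_eq_integral_inv hρ hF hq).continuousAt.continuousWithinAt
  refine ⟨strictMonoOn_of_deriv_pos (convex_Ioi 0) hcont fun q hq => ?_, hcont, hG₁, hG₂⟩
  rw [interior_Ioi] at hq
  rw [(hasDerivAt_of_eq_integral_inv hρ hF hq).deriv]
  exact inv_pos.2 (hρ.2.2 q hq)

end IntegralInverse

theorem ClassK.nonneg_s5 {γ : ℝ → ℝ} (hγ : ClassK γ) {q : ℝ} (hq : 0 ≤ q) : 0 ≤ γ q := by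
  simpa [hγ.2.2] using hγ.2.1.monotoneOn self_mem_Ici hq hq

namespace ClassKInf

variable {κ : ℝ → ℝ}

def orderIso (hκ : ClassKInf κ) : Ici (0 : ℝ) ≃o Ici (0 : ℝ) :=
  StrictMono.orderIsoOfSurjective (fun q => ⟨κ q, hκ.1.nonneg_s5 q.2⟩)
    (fun q q' h => hκ.1.2.1 q.2 q'.2 h) fun v => by
      obtain ⟨q, hq, hqv⟩ := intermediate_value_Ici hκ.1.1 hκ.2 (by rw [hκ.1.2.2]; exact v.2)
      exact ⟨⟨q, hq⟩, Subtype.ext hqv⟩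

/-- The inverse of `κ` on `[0, ∞)`; it is `0` on `(-∞, 0]`. -/
def inv (hκ : ClassKInf κ) (v : ℝ) : ℝ := hκ.orderIso.symm (projIci 0 v)

theorem continuous_inv (hκ : ClassKInf κ) : Continuous hκ.inv :=
  continuous_subtype_val.comp <| hκ.orderIso.symm.continuous.comp <|
    (continuous_const.max continuous_id).subtype_mk _

theorem inv_nonneg (hκ : ClassKInf κ) (v : ℝ) : 0 ≤ hκ.inv v :=
  (hκ.orderIso.symm (projIci 0 v)).2

theorem inv_apply (hκ : ClassKInf κ) {q : ℝ} (hq : 0 ≤ q) : hκ.inv (κ q) = q := by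
  have : projIci 0 (κ q) = hκ.orderIso ⟨q, hq⟩ := projIci_of_mem (hκ.1.nonneg_s5 hq)
  simp [inv, this]

theorem apply_inv (hκ : ClassKInf κ) {v : ℝ} (hv : 0 ≤ v) : κ (hκ.inv v) = v := by
  rw [inv, projIci_of_mem hv]
  exact congrArg Subtype.val (hκ.orderIso.apply_symm_apply _)

theorem inv_pos (hκ : ClassKInf κ) {v : ℝ} (hv : 0 < v) : 0 < hκ.inv v := by
  refine (hκ.inv_nonneg v).lt_of_ne fun h => hv.ne ?_
  rw [← hκ.apply_inv hv.le, ← h, hκ.1.2.2]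

end ClassKInf

/-- `G (F q - l)` is the value at time `l` of the solution of `ż = -ρ(z)` started at `q`
when `F' = 1 / ρ`; the case `q = 0` encodes the convention `F̃(0) = m`. -/
def comparisonFlow (F G : ℝ → ℝ) (q l : ℝ) : ℝ := if q = 0 then 0 else G (F q - l)

namespace IsZeroExtendedInverse

variable {F G : ℝ → ℝ} {q l L M : ℝ}

theorem comparisonFlow_mem_Icc (hG : IsZeroExtendedInverse F G) (hq : 0 ≤ q) (hl : 0 ≤ l) :
    comparisonFlow F G q l ∈ Icc 0 q := by
  rcases hq.eq_or_lt with rfl | hq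
  · simp [comparisonFlow]
  · rw [comparisonFlow, if_neg hq.ne']
    exact hG.mem_Icc hq (by linarith)

theorem comparisonFlow_zero (hG : IsZeroExtendedInverse F G) (hq : 0 ≤ q) :
    comparisonFlow F G q 0 = q := by
  rcases hq.eq_or_lt with rfl | hq
  · simp [comparisonFlow]
  · rw [comparisonFlow, if_neg hq.ne', sub_zero, hG.apply_apply q hq]

theorem comparisonFlow_le (hG : IsZeroExtendedInverse F G) (hL : 0 < L) (hq : 0 ≤ q)
    (hqM : q ≤ M) (hM : F M - l ≤ F L) : comparisonFlow F G q l ≤ L := by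
  rcases hq.eq_or_lt with rfl | hq
  · simpa [comparisonFlow] using hL.le
  · rw [comparisonFlow, if_neg hq.ne']
    refine (hG.mem_Icc hL ?_).2
    linarith [hG.strictMonoOn.monotoneOn hq (hq.trans_le hqM) hqM]

theorem continuousAt_comparisonFlow (hG : IsZeroExtendedInverse F G) (hq : 0 < q)
    (hl : 0 ≤ l) : ContinuousAt (Function.uncurry (comparisonFlow F G)) (q, l) := by
  have hFG : ContinuousAt (fun x : ℝ × ℝ => G (F x.1 - x.2)) (q, l) :=
    (hG.continuousAt hq (by linarith : F q - l ≤ F q)).comp (f := fun x : ℝ × ℝ => F x.1 - x.2)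
      (((hG.continuousOn.continuousAt (Ioi_mem_nhds hq)).comp continuousAt_fst).sub
        continuousAt_snd)
  refine hFG.congr ?_
  filter_upwards [continuousAt_fst.eventually_ne hq.ne'] with x hx using (if_neg hx).symm

theorem continuousOn_comparisonFlow (hG : IsZeroExtendedInverse F G) :
    ContinuousOn (Function.uncurry (comparisonFlow F G)) (Ici 0 ×ˢ Ici 0) := by
  rintro ⟨q, l⟩ ⟨hq, hl⟩
  rcases (mem_Ici.1 hq).eq_or_lt with rfl | hq
  · show Tendsto _ _ (𝓝 (if (0 : ℝ) = 0 then 0 else _))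
    rw [if_pos rfl]
    refine tendsto_of_tendsto_of_tendsto_of_le_of_le' tendsto_const_nhds
      (continuousAt_fst.tendsto.mono_left nhdsWithin_le_nhds) ?_ ?_ <;>
    filter_upwards [self_mem_nhdsWithin] with x hx
    exacts [(hG.comparisonFlow_mem_Icc hx.1 hx.2).1, (hG.comparisonFlow_mem_Icc hx.1 hx.2).2]
  · exact (hG.continuousAt_comparisonFlow hq hl).continuousWithinAt

theorem diniUpper_comparisonFlow_le {ρ w ℓ : ℝ → ℝ} {t k : ℝ}
    (hρ : ∀ q, 0 < q → 0 < ρ q) (hF : ∀ q, 0 < q → HasDerivAt F (ρ q)⁻¹ q)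
    (hG : IsZeroExtendedInverse F G) (hk : k < 1) (hℓ : ∀ u, ℓ u = ℓ t - k * (u - t))
    (hℓt : 0 ≤ ℓ t) (hw : ContinuousWithinAt w (Ioi t) t) (hwt : 0 < w t)
    (hDw : DiniUpper w t ≤ ↑(-ρ (w t))) (hpos : 0 < comparisonFlow F G (w t) (ℓ t)) :
    DiniUpper (fun u => comparisonFlow F G (w u) (ℓ u)) t ≤
      ↑(-((1 - k) * ρ (comparisonFlow F G (w t) (ℓ t)))) := by
  set P : ℝ → ℝ := fun u => F (w u) - ℓ u
  have hflow : ∀ u, w u ≠ 0 → comparisonFlow F G (w u) (ℓ u) = G (P u) := fun u hu => if_neg hu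
  rw [hflow t hwt.ne'] at hpos ⊢
  have hFw : DiniUpper (F ∘ w) t ≤ ↑(-1 : ℝ) := by
    simpa [inv_mul_cancel₀ (hρ _ hwt).ne'] using
      diniUpper_comp_le (hρ _ hwt) (inv_pos.2 (hρ _ hwt)) hw hDw (hF _ hwt)
  have hP : DiniUpper P t ≤ ↑(-(1 - k)) := by
    refine (diniUpper_mono ?_).trans ((diniUpper_add_mul_le hFw k).trans_eq (by ring_nf))
    filter_upwards with u
    simp only [P, Function.comp_apply, hℓ u]
    linarith
  have hPc : ContinuousWithinAt P (Ioi t) t := by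
    have hℓc : Continuous ℓ := by rw [funext hℓ]; fun_prop
    exact ((hF _ hwt).continuousAt.comp_continuousWithinAt hw).sub hℓc.continuousWithinAt
  have hPt : P t ≤ F (w t) := by simp only [P]; linarith
  have hGP : HasDerivAt G (ρ (G (P t))) (P t) := by
    simpa using hG.hasDerivAt hwt hPt hpos (hF _ hpos) (inv_pos.2 (hρ _ hpos)).ne'
  refine (diniUpper_mono ?_).trans
    ((diniUpper_comp_le (by linarith) (hρ _ hpos) hPc hP hGP).trans_eq (by ring_nf))
  filter_upwards [hw.eventually_ne hwt.ne'] with u hu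
  rw [hflow u hu, hflow t hwt.ne']
  rfl

end IsZeroExtendedInverse

/-- The paper's `max {v₁, v₂}` as a function of `q = V_cand(y)` and of the time shift `l`. -/
def lyapunovMax (F G κ : ℝ → ℝ) (q l : ℝ) : ℝ := max (comparisonFlow F G q l) (κ q)

namespace IsZeroExtendedInverse

variable {F G κ : ℝ → ℝ} {q l L : ℝ}

theorem lyapunovMax_mem_Icc (hG : IsZeroExtendedInverse F G) (hκq : κ q ≤ q) (hq : 0 ≤ q)
    (hl : 0 ≤ l) : lyapunovMax F G κ q l ∈ Icc (κ q) q :=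
  ⟨le_max_right _ _, max_le (hG.comparisonFlow_mem_Icc hq hl).2 hκq⟩

theorem lyapunovMax_zero (hG : IsZeroExtendedInverse F G) (hκq : κ q ≤ q) (hq : 0 ≤ q) :
    lyapunovMax F G κ q 0 = q := by
  rw [lyapunovMax, hG.comparisonFlow_zero hq, max_eq_left hκq]

theorem continuousOn_lyapunovMax (hG : IsZeroExtendedInverse F G)
    (hκ : ContinuousOn κ (Ici 0)) :
    ContinuousOn (Function.uncurry (lyapunovMax F G κ)) (Ici 0 ×ˢ Ici 0) :=
  ContinuousOn.sup hG.continuousOn_comparisonFlow (hκ.comp continuousOn_fst fun _ hx => hx.1)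

theorem lyapunovMax_le {α αinv : ℝ → ℝ} (hG : IsZeroExtendedInverse F G) (hα : ClassK α)
    (hαinv : ∀ s, 0 ≤ s → 0 ≤ αinv s ∧ α (αinv s) = s) (hκα : ∀ s, 0 ≤ s → κ s ≤ αinv s)
    (hdwell : ∀ a, 0 < a → F (α a) - F a ≤ l) (hL : 0 ≤ L) (hq : 0 ≤ q) (hqL : q ≤ α L) :
    lyapunovMax F G κ q l ≤ L := by
  refine max_le ?_ ((hκα q hq).trans ?_)
  · rcases hL.eq_or_lt with rfl | hL
    · rw [hα.2.2] at hqL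
      simp [comparisonFlow, le_antisymm hqL hq]
    · exact hG.comparisonFlow_le hL hq hqL (by linarith [hdwell L hL])
  · rw [← hα.2.1.le_iff_le (hαinv q hq).1 hL, (hαinv q hq).2]
    exact hqL

theorem diniUpper_lyapunovMax_le {ρ κd φ w ℓ : ℝ → ℝ} {t k : ℝ} (hρ : ClassP ρ)
    (hF : ∀ q, 0 < q → HasDerivAt F (ρ q)⁻¹ q) (hG : IsZeroExtendedInverse F G)
    (hκ : ClassK κ) (hκd : ∀ q, 0 < q → HasDerivAt κ (κd q) q)
    (hκdpos : ∀ q, 0 < q → 0 < κd q) (hκq : ∀ q, 0 ≤ q → κ q ≤ q) (hφ0 : φ 0 = 0)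
    (hφρ : ∀ v, 0 ≤ v → φ v ≤ (1 - k) * ρ v) (hφκ : ∀ q, 0 < q → φ (κ q) ≤ κd q * ρ q)
    (hk : k < 1) (hℓ : ∀ u, ℓ u = ℓ t - k * (u - t)) (hℓt : 0 < ℓ t) (hw0 : ∀ u, 0 ≤ w u)
    (hw : ContinuousWithinAt w (Ioi t) t) (hDw : DiniUpper w t ≤ ↑(-ρ (w t))) :
    DiniUpper (fun u => lyapunovMax F G κ (w u) (ℓ u)) t ≤
      ↑(-φ (lyapunovMax F G κ (w t) (ℓ t))) := by
  have hℓc : Continuous ℓ := by rw [funext hℓ]; fun_prop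
  rcases (hw0 t).eq_or_lt with hwt | hwt
  · have hzero : lyapunovMax F G κ (w t) (ℓ t) = 0 := by
      simp [lyapunovMax, comparisonFlow, ← hwt, hκ.2.2]
    rw [hzero, hφ0, neg_zero]
    refine (diniUpper_mono ?_).trans (hDw.trans (by rw [← hwt, hρ.2.1, neg_zero]))
    filter_upwards [(hℓc.continuousAt.continuousWithinAt (s := Ioi t)).eventually
      (eventually_gt_nhds hℓt)] with u hu
    rw [hzero, ← hwt]
    linarith [(hG.lyapunovMax_mem_Icc (hκq _ (hw0 u)) (hw0 u) hu.le).2]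
  have hρw := hρ.2.2 _ hwt
  have hκw : 0 < κ (w t) := by simpa [hκ.2.2] using hκ.2.1 self_mem_Ici hwt.le hwt
  refine diniUpper_max_le
    ((hG.continuousAt_comparisonFlow hwt hℓt.le).comp_continuousWithinAt
      (f := fun u => (w u, ℓ u)) (hw.prodMk hℓc.continuousWithinAt))
    ((hκd _ hwt).continuousAt.comp_continuousWithinAt hw) (fun hact => ?_) (fun hact => ?_)
  · have hpos := hκw.trans_le hact
    rw [lyapunovMax, max_eq_left hact]
    refine (hG.diniUpper_comparisonFlow_le hρ.2.2 hF hk hℓ hℓt.le hw hwt hDw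
      hpos).trans (EReal.coe_le_coe_iff.2 (neg_le_neg (hφρ _ hpos.le)))
  · rw [lyapunovMax, max_eq_right hact]
    refine (diniUpper_comp_le hρw (hκdpos _ hwt) hw hDw (hκd _ hwt)).trans
      (EReal.coe_le_coe_iff.2 (neg_le_neg (hφκ _ hwt)))

end IsZeroExtendedInverse

/-- The time shift `λ` of `v₁` on `[τ i, τ (i + 1))`. -/
def dwellShift (θ δ : ℝ) (τ : ℕ → ℝ) (i : ℕ) (t : ℝ) : ℝ :=
  (τ (i + 1) - t) / (τ (i + 1) - τ i) * (θ - δ)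

section DwellShift

variable {θ δ t : ℝ} {τ : ℕ → ℝ} {i : ℕ}

theorem continuous_dwellShift : Continuous (dwellShift θ δ τ i) := by
  unfold dwellShift
  fun_prop

theorem dwellShift_nonneg (hθδ : δ ≤ θ) (hτ : τ i < τ (i + 1)) (ht : t ≤ τ (i + 1)) :
    0 ≤ dwellShift θ δ τ i t :=
  mul_nonneg (div_nonneg (by linarith) (by linarith)) (by linarith)

theorem dwellShift_pos (hθδ : δ < θ) (hτ : τ i < τ (i + 1)) (ht : t < τ (i + 1)) :
    0 < dwellShift θ δ τ i t :=
  mul_pos (div_pos (by linarith) (by linarith)) (by linarith)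

theorem dwellShift_left (hτ : τ i < τ (i + 1)) : dwellShift θ δ τ i (τ i) = θ - δ := by
  rw [dwellShift, div_self (sub_pos.2 hτ).ne', one_mul]

theorem dwellShift_right : dwellShift θ δ τ i (τ (i + 1)) = 0 := by
  simp [dwellShift]

theorem dwellShift_eq_sub (hτ : τ i < τ (i + 1)) (u : ℝ) :
    dwellShift θ δ τ i u =
      dwellShift θ δ τ i t - (θ - δ) / (τ (i + 1) - τ i) * (u - t) := by
  unfold dwellShift
  field_simp [(sub_pos.2 hτ).ne']
  ring

end DwellShift

section Impulsive

variable {t₀ : ℝ} {τ : ℕ → ℝ} {w v : ℝ → ℝ} {S : Set ℝ}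

theorem IsImpulseSeq.exists_mem_Ico_s5 (hτ : IsImpulseSeq t₀ τ) {t : ℝ} (ht : t₀ ≤ t) :
    ∃ i, t ∈ Ico (τ i) (τ (i + 1)) := by
  have hex : ∃ j, t < τ j := (hτ.2.2.eventually_gt_atTop t).exists
  have hpos : Nat.find hex ≠ 0 := fun h => by
    have := Nat.find_spec hex
    rw [h, hτ.1] at this
    linarith
  refine ⟨Nat.find hex - 1, not_lt.1 (Nat.find_min hex (by omega)), ?_⟩
  rw [Nat.sub_add_cancel (Nat.one_le_iff_ne_zero.2 hpos)]
  exact Nat.find_spec hex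

theorem continuousWithinAt_of_eqOn {H : ℝ → ℝ → ℝ} {I J s : Set ℝ} {t : ℝ}
    (hH : ContinuousOn (Function.uncurry H) (J ×ˢ S)) (hIJ : I ⊆ J) (hwS : ∀ u, w u ∈ S)
    (hv : EqOn v (fun u => H u (w u)) I) (ht : t ∈ I) (hI : I ∈ 𝓝[s] t)
    (hw : ContinuousWithinAt w s t) : ContinuousWithinAt v s t := by
  rw [← continuousWithinAt_inter' hI]
  have hHw : ContinuousWithinAt (fun u => H u (w u)) (s ∩ I) t :=
    (hH _ ⟨hIJ ht, hwS t⟩).comp (f := fun u => (u, w u))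
      (continuousWithinAt_id.prodMk (hw.mono inter_subset_left)) fun u hu => ⟨hIJ hu.2, hwS u⟩
  exact hHw.congr (fun u hu => hv hu.2) (hv ht)

theorem tendsto_nhdsLT_of_eqOn {H : ℝ → ℝ → ℝ} {a b L : ℝ} (hab : a < b)
    (hH : ContinuousOn (Function.uncurry H) (Icc a b ×ˢ S)) (hS : IsClosed S)
    (hwS : ∀ u, w u ∈ S) (hv : EqOn v (fun u => H u (w u)) (Ico a b))
    (hw : Tendsto w (𝓝[<] b) (𝓝 L)) : Tendsto v (𝓝[<] b) (𝓝 (H b L)) := by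
  have hL : L ∈ S := hS.mem_of_tendsto hw (Eventually.of_forall hwS)
  have hpair : Tendsto (fun u => (u, w u)) (𝓝[<] b) (𝓝[Icc a b ×ˢ S] (b, L)) := by
    refine tendsto_nhdsWithin_iff.2 ⟨(tendsto_id.mono_left nhdsWithin_le_nhds).prodMk_nhds hw, ?_⟩
    filter_upwards [Ico_mem_nhdsLT hab] with u hu
    exact ⟨Ico_subset_Icc_self hu, hwS u⟩
  refine ((hH _ ⟨right_mem_Icc.2 hab.le, hL⟩).tendsto.comp hpair).congr' ?_
  filter_upwards [Ico_mem_nhdsLT hab] with u hu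
  exact (hv hu).symm

theorem ImpulsiveRegular.of_eqOn {H : ℕ → ℝ → ℝ → ℝ} (hτ : IsImpulseSeq t₀ τ)
    (hw : ImpulsiveRegular t₀ τ w)
    (hH : ∀ i, ContinuousOn (Function.uncurry (H i)) (Icc (τ i) (τ (i + 1)) ×ˢ S))
    (hS : IsClosed S) (hwS : ∀ u, w u ∈ S)
    (hv : ∀ i, EqOn v (fun u => H i u (w u)) (Ico (τ i) (τ (i + 1)))) :
    ImpulsiveRegular t₀ τ v := by
  have hright : ∀ t, t₀ ≤ t → ContinuousWithinAt v (Ici t) t := fun t ht => by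
    obtain ⟨i, hi⟩ := hτ.exists_mem_Ico_s5 ht
    exact continuousWithinAt_of_eqOn (hH i) Ico_subset_Icc_self hwS (hv i) hi
      (Ico_mem_nhdsGE_of_mem hi) (hw.1 t ht)
  refine ⟨hright, fun t ht htS => ?_, fun i hi => ?_⟩
  · obtain ⟨i, hi⟩ := hτ.exists_mem_Ico_s5 ht
    rcases hi.1.eq_or_lt with hτt | hτt
    · obtain rfl : i = 0 := by
        by_contra h
        exact htS ⟨i, Nat.one_le_iff_ne_zero.2 h, hτt⟩
      rw [← hτt, hτ.1]
      exact hright t₀ le_rfl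
    · exact continuousWithinAt_of_eqOn (hH i) Ico_subset_Icc_self hwS (hv i) hi
        (mem_nhdsWithin_of_mem_nhds (mem_of_superset (Ioo_mem_nhds hτt hi.2) Ioo_subset_Ico_self))
        (hw.2.1 t ht htS)
  · obtain ⟨L, hL⟩ := hw.2.2 i hi
    obtain ⟨j, rfl⟩ : ∃ j, i = j + 1 := ⟨i - 1, by omega⟩
    exact ⟨_, tendsto_nhdsLT_of_eqOn (hτ.2.1 j.lt_succ_self) (hH j) hS hwS (hv j) hL⟩

end Impulsive

theorem ClassP.nonneg_s5 {ρ : ℝ → ℝ} (hρ : ClassP ρ) {v : ℝ} (hv : 0 ≤ v) : 0 ≤ ρ v := by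
  rcases hv.eq_or_lt with rfl | hv
  exacts [hρ.2.1.ge, (hρ.2.2 v hv).le]

/-- The decay rate of `max {v₁, v₂}`: the first term bounds the decay of `v₁`, the second that of
`v₂ = κ ∘ V_cand`, read off at `V_cand = κ⁻¹ (v₂)`. -/
def decayRate (ρ κd κinv : ℝ → ℝ) (c v : ℝ) : ℝ := min (c * ρ v) (κd (κinv v) * ρ (κinv v))

theorem classP_decayRate {ρ κ κd : ℝ → ℝ} {c : ℝ} (hρ : ClassP ρ) (hκ : ClassKInf κ)
    (hκd : ClassP κd) (hc : 0 < c) : ClassP (decayRate ρ κd hκ.inv c) := by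
  have hinv0 : hκ.inv 0 = 0 := by simpa [hκ.1.2.2] using hκ.inv_apply le_rfl
  refine ⟨ContinuousOn.inf (continuousOn_const.mul hρ.1) ?_, by simp [decayRate, hinv0, hρ.2.1],
    fun v hv => lt_min (mul_pos hc (hρ.2.2 v hv)) ?_⟩
  · have hmaps : MapsTo hκ.inv (Ici 0) (Ici 0) := fun v _ => hκ.inv_nonneg v
    exact (hκd.1.comp hκ.continuous_inv.continuousOn hmaps).mul
      (hρ.1.comp hκ.continuous_inv.continuousOn hmaps)
  · exact mul_pos (hκd.2.2 _ (hκ.inv_pos hv)) (hρ.2.2 _ (hκ.inv_pos hv))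

section Trajectory

variable {F G κ w v : ℝ → ℝ} {θ δ t₀ : ℝ} {τ : ℕ → ℝ}

theorem continuousOn_lyapunovMax_dwellShift {i : ℕ} (hG : IsZeroExtendedInverse F G)
    (hκ : ContinuousOn κ (Ici 0)) (hθδ : δ ≤ θ) (hτ : τ i < τ (i + 1)) :
    ContinuousOn (Function.uncurry fun t q => lyapunovMax F G κ q (dwellShift θ δ τ i t))
      (Icc (τ i) (τ (i + 1)) ×ˢ Ici 0) :=
  (hG.continuousOn_lyapunovMax hκ).comp
    (continuous_snd.prodMk (continuous_dwellShift.comp continuous_fst)).continuousOn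
    fun _ hx => ⟨hx.2, dwellShift_nonneg hθδ hτ hx.1.2⟩

theorem impulsiveRegular_of_eqOn_lyapunovMax (hG : IsZeroExtendedInverse F G)
    (hκ : ContinuousOn κ (Ici 0)) (hθδ : δ ≤ θ) (hτ : IsImpulseSeq t₀ τ)
    (hw : ImpulsiveRegular t₀ τ w) (hw0 : ∀ u, 0 ≤ w u)
    (hv : ∀ i, EqOn v (fun t => lyapunovMax F G κ (w t) (dwellShift θ δ τ i t))
      (Ico (τ i) (τ (i + 1)))) :
    ImpulsiveRegular t₀ τ v :=
  ImpulsiveRegular.of_eqOn hτ hw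
    (fun i => continuousOn_lyapunovMax_dwellShift hG hκ hθδ (hτ.2.1 i.lt_succ_self))
    isClosed_Ici hw0 hv

theorem leftLim_eq_of_eqOn_lyapunovMax {i : ℕ} (hG : IsZeroExtendedInverse F G)
    (hκ : ContinuousOn κ (Ici 0)) (hκq : ∀ q, 0 ≤ q → κ q ≤ q) (hθδ : δ ≤ θ)
    (hτ : IsImpulseSeq t₀ τ) (hw : ImpulsiveRegular t₀ τ w) (hw0 : ∀ u, 0 ≤ w u)
    (hv : ∀ i, EqOn v (fun t => lyapunovMax F G κ (w t) (dwellShift θ δ τ i t))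
      (Ico (τ i) (τ (i + 1)))) (hi : 1 ≤ i) :
    Function.leftLim v (τ i) = Function.leftLim w (τ i) := by
  obtain ⟨L, hL⟩ := hw.2.2 i hi
  obtain ⟨j, rfl⟩ : ∃ j, i = j + 1 := ⟨i - 1, by omega⟩
  have hL0 : 0 ≤ L := ge_of_tendsto hL (Eventually.of_forall hw0)
  have hvL := tendsto_nhdsLT_of_eqOn (hτ.2.1 j.lt_succ_self)
    (continuousOn_lyapunovMax_dwellShift hG hκ hθδ (hτ.2.1 j.lt_succ_self)) isClosed_Ici hw0
    (hv j) hL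
  rw [dwellShift_right, hG.lyapunovMax_zero (hκq L hL0) hL0] at hvL
  rw [leftLim_eq_of_tendsto hvL, leftLim_eq_of_tendsto hL]

theorem apply_le_of_eqOn_lyapunovMax {α αinv : ℝ → ℝ} {i : ℕ} {L : ℝ}
    (hG : IsZeroExtendedInverse F G) (hα : ClassK α)
    (hαinv : ∀ s, 0 ≤ s → 0 ≤ αinv s ∧ α (αinv s) = s) (hκα : ∀ s, 0 ≤ s → κ s ≤ αinv s)
    (hdwell : ∀ a, 0 < a → F (α a) - F a ≤ θ - δ) (hτ : τ i < τ (i + 1)) (hw0 : ∀ u, 0 ≤ w u)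
    (hv : EqOn v (fun t => lyapunovMax F G κ (w t) (dwellShift θ δ τ i t)) (Ico (τ i) (τ (i + 1))))
    (hL : 0 ≤ L) (hwL : w (τ i) ≤ α L) : v (τ i) ≤ L := by
  rw [hv ⟨le_rfl, hτ⟩]
  dsimp only
  rw [dwellShift_left hτ]
  exact hG.lyapunovMax_le hα hαinv hκα hdwell hL (hw0 _) hwL

theorem diniUpper_le_of_eqOn_lyapunovMax {ρ κd φ : ℝ → ℝ} {t : ℝ} (hρ : ClassP ρ)
    (hF : ∀ q, 0 < q → HasDerivAt F (ρ q)⁻¹ q) (hG : IsZeroExtendedInverse F G)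
    (hκ : ClassK κ) (hκd : ∀ q, 0 < q → HasDerivAt κ (κd q) q)
    (hκdpos : ∀ q, 0 < q → 0 < κd q) (hκq : ∀ q, 0 ≤ q → κ q ≤ q) (hφ0 : φ 0 = 0)
    (hφρ : ∀ v, φ v ≤ δ / θ * ρ v) (hφκ : ∀ q, 0 < q → φ (κ q) ≤ κd q * ρ q)
    (hδ : 0 < δ) (hθδ : δ < θ) (hτ : IsImpulseSeq t₀ τ) (hdwell : ∀ i, θ ≤ τ (i + 1) - τ i)
    (hw0 : ∀ u, 0 ≤ w u)
    (hv : ∀ i, EqOn v (fun t => lyapunovMax F G κ (w t) (dwellShift θ δ τ i t))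
      (Ico (τ i) (τ (i + 1))))
    (ht : t₀ ≤ t) (hw : ContinuousWithinAt w (Ici t) t) (hDw : DiniUpper w t ≤ ↑(-ρ (w t))) :
    DiniUpper v t ≤ ↑(-φ (v t)) := by
  obtain ⟨i, hi⟩ := hτ.exists_mem_Ico_s5 ht
  have hθ : 0 < θ := hδ.trans hθδ
  have hτi : τ i < τ (i + 1) := hτ.2.1 i.lt_succ_self
  have hk : (θ - δ) / (τ (i + 1) - τ i) ≤ 1 - δ / θ := by
    rw [one_sub_div hθ.ne']
    exact div_le_div_of_nonneg_left (by linarith) hθ (hdwell i)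
  have hφk : ∀ v, 0 ≤ v → φ v ≤ (1 - (θ - δ) / (τ (i + 1) - τ i)) * ρ v := fun v hv =>
    (hφρ v).trans (mul_le_mul_of_nonneg_right (by linarith) (hρ.nonneg_s5 hv))
  have hlyap := hG.diniUpper_lyapunovMax_le hρ hF hκ hκd hκdpos hκq hφ0 hφk hφκ
    (by linarith [div_pos hδ hθ]) (dwellShift_eq_sub hτi) (dwellShift_pos hθδ hτi hi.2) hw0
    (hw.mono Ioi_subset_Ici_self) hDw
  rw [hv i hi]
  refine (diniUpper_mono ?_).trans hlyap
  filter_upwards [Ico_mem_nhdsGT_of_mem hi] with u hu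
  rw [hv i hu, hv i hi]

end Trajectory

universe u

theorem constructionStableFlow_general
    (ρ α αinv κ κd : ℝ → ℝ)
    (hρ : ClassP ρ) (hα : ClassKInf α) (hαge : ∀ a, 0 ≤ a → a ≤ α a)
    (hαinv2 : ∀ s, 0 ≤ s → 0 ≤ αinv s ∧ α (αinv s) = s)
    (θ δ : ℝ) (hδ : 0 < δ) (hθδ : δ < θ)
    (hdwellint : ∀ a, 0 < a → (∫ s in a..(α a), (ρ s)⁻¹) ≤ θ - δ)
    (hκ : ClassKInf κ)
    (hκderiv : ∀ s, 0 ≤ s → HasDerivWithinAt κ (κd s) (Set.Ici 0) s)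
    (hκdP : ClassP κd)
    (hκle : ∀ s, 0 ≤ s → κ s ≤ min (αinv s) s)
    (Ftil G : ℝ → ℝ)
    (hFtil : ∀ q, Ftil q = ∫ s in (1:ℝ)..q, (ρ s)⁻¹)
    (hG1 : ∀ q, 0 < q → G (Ftil q) = q)
    (hG2 : ∀ p : ℝ, (∀ q, 0 < q → p ≤ Ftil q) → G p = 0) :
    ∃ φ : ℝ → ℝ, ClassP φ ∧
      ∀ ψ₁ ψ₂ η ψ₃ : ℝ → ℝ, ClassKInf ψ₁ → ClassKInf ψ₂ → ClassKInf η → ClassK ψ₃ →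
      ∀ (X : Type u) [NormedAddCommGroup X] [NormedSpace ℝ X],
      ∀ (t₀ : ℝ) (τ : ℕ → ℝ), IsImpulseSeq t₀ τ →
      (∀ i : ℕ, θ ≤ τ (i + 1) - τ i) →
      ∀ r : ℝ, 0 ≤ r →
      ∀ Vc : X → ℝ, Continuous Vc →
      (∀ y : X, ψ₁ ‖y‖ ≤ Vc y ∧ Vc y ≤ ψ₂ ‖y‖) →
      ∀ x : ℝ → X,
      ImpulsiveRegular t₀ τ (fun t => Vc (x t)) →
      (∀ t, t₀ ≤ t → t ∉ impulseSet τ → η r ≤ Vc (x t) →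
        DiniUpper (fun s => Vc (x s)) t ≤ (((-ρ (Vc (x t))) : ℝ) : EReal)) →
      (∀ i : ℕ, 1 ≤ i → η r ≤ Function.leftLim (fun s => Vc (x s)) (τ i) →
        Vc (x (τ i)) ≤ α (Function.leftLim (fun s => Vc (x s)) (τ i))) →
      (∀ i : ℕ, 1 ≤ i → Function.leftLim (fun s => Vc (x s)) (τ i) < η r →
        Vc (x (τ i)) ≤ ψ₃ r) →
      ∀ V : ℝ → X → ℝ,
      (∀ i : ℕ, ∀ t, τ i ≤ t → t < τ (i + 1) → ∀ y : X,
        V t y = max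
          (if Vc y = 0 then 0
            else G (Ftil (Vc y) - ((τ (i + 1) - t) / (τ (i + 1) - τ i)) * (θ - δ)))
          (κ (Vc y))) →
      -- (i) sandwich bounds
      (∀ t, t₀ ≤ t → ∀ y : X, κ (ψ₁ ‖y‖) ≤ V t y ∧ V t y ≤ ψ₂ ‖y‖) ∧
      -- the map t ↦ V(t, x(t)) is impulsive-regular
      ImpulsiveRegular t₀ τ (fun t => V t (x t)) ∧
      -- (ii) decay along the flow outside the perturbation radius χ(r) = α(η(r))
      (∀ t, t₀ ≤ t → t ∉ impulseSet τ → α (η r) ≤ V t (x t) →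
        DiniUpper (fun s => V s (x s)) t ≤ (((-φ (V t (x t))) : ℝ) : EReal)) ∧
      -- (ii) non-increase at jumps outside the perturbation radius
      (∀ i : ℕ, 1 ≤ i → α (η r) ≤ Function.leftLim (fun s => V s (x s)) (τ i) →
        V (τ i) (x (τ i)) ≤ Function.leftLim (fun s => V s (x s)) (τ i)) ∧
      -- (iii) bound at jumps inside the perturbation radius
      (∀ i : ℕ, 1 ≤ i → Function.leftLim (fun s => V s (x s)) (τ i) < α (η r) →
        V (τ i) (x (τ i)) ≤ max (ψ₃ r) (α (η r))) := by
  have hG := isZeroExtendedInverse_of_eq_integral_inv hρ hFtil hG1 hG2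
  have hF : ∀ q, 0 < q → HasDerivAt Ftil (ρ q)⁻¹ q := fun _ =>
    hasDerivAt_of_eq_integral_inv hρ hFtil
  have hdwell' : ∀ a, 0 < a → Ftil (α a) - Ftil a ≤ θ - δ := fun a ha => by
    rw [sub_eq_integral_inv hρ hFtil ha (ha.trans_le (hαge a ha.le))]
    exact hdwellint a ha
  have hκd : ∀ q, 0 < q → HasDerivAt κ (κd q) q := fun q hq =>
    (hκderiv q hq.le).hasDerivAt (Ici_mem_nhds hq)
  have hκq : ∀ q, 0 ≤ q → κ q ≤ q := fun q hq => (hκle q hq).trans (min_le_right _ _)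
  have hφ := classP_decayRate hρ hκ hκdP (div_pos hδ (hδ.trans hθδ))
  refine ⟨_, hφ, fun ψ₁ ψ₂ η ψ₃ hψ₁ _ hη _ X _ _ t₀ τ hτ hdwell r hr Vc _ hsand x hreg hflow
    hjump hjump' V hV => ?_⟩
  have hVc : ∀ y, 0 ≤ Vc y := fun y => (hψ₁.1.nonneg_s5 (norm_nonneg y)).trans (hsand y).1
  have hV' : ∀ t, t₀ ≤ t → ∀ y, V t y ∈ Icc (κ (Vc y)) (Vc y) := fun t ht y => by
    obtain ⟨i, hi⟩ := hτ.exists_mem_Ico_s5 ht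
    rw [hV i t hi.1 hi.2 y]
    exact hG.lyapunovMax_mem_Icc (hκq _ (hVc y)) (hVc y)
      (dwellShift_nonneg hθδ.le (hτ.2.1 i.lt_succ_self) hi.2.le)
  have hv : ∀ i, EqOn (fun t => V t (x t))
      (fun t => lyapunovMax Ftil G κ (Vc (x t)) (dwellShift θ δ τ i t)) (Ico (τ i) (τ (i + 1))) :=
    fun i t ht => hV i t ht.1 ht.2 (x t)
  have hleft : ∀ i, 1 ≤ i → Function.leftLim (fun t => V t (x t)) (τ i) =
      Function.leftLim (fun t => Vc (x t)) (τ i) := fun i =>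
    leftLim_eq_of_eqOn_lyapunovMax hG hκ.1.1 hκq hθδ.le hτ hreg (fun t => hVc (x t)) hv
  have hηr : η r ≤ α (η r) := hαge _ (hη.1.nonneg_s5 hr)
  have hjumpV : ∀ i, 1 ≤ i → η r ≤ Function.leftLim (fun t => Vc (x t)) (τ i) →
      V (τ i) (x (τ i)) ≤ Function.leftLim (fun t => Vc (x t)) (τ i) := fun i hi hL =>
    apply_le_of_eqOn_lyapunovMax (v := fun t => V t (x t)) hG hα.1 hαinv2
      (fun s hs => (hκle s hs).trans (min_le_left _ _)) hdwell' (hτ.2.1 i.lt_succ_self)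
      (fun t => hVc (x t)) (hv i) ((hη.1.nonneg_s5 hr).trans hL) (hjump i hi hL)
  refine ⟨fun t ht y => ⟨?_, ?_⟩, impulsiveRegular_of_eqOn_lyapunovMax hG hκ.1.1 hθδ.le hτ hreg
    (fun t => hVc (x t)) hv, fun t ht htS hVt => ?_, fun i hi hVi => ?_, fun i hi hVi => ?_⟩
  · exact (hκ.1.2.1.monotoneOn (hψ₁.1.nonneg_s5 (norm_nonneg y)) (hVc y) (hsand y).1).trans
      (hV' t ht y).1
  · exact (hV' t ht y).2.trans (hsand y).2
  · refine diniUpper_le_of_eqOn_lyapunovMax hρ hF hG hκ.1 hκd hκdP.2.2 hκq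
      hφ.2.1 (fun v => min_le_left _ _) (fun q hq => ?_) hδ hθδ hτ hdwell (fun t => hVc (x t)) hv
      ht (hreg.1 t ht) (hflow t ht htS (hηr.trans (hVt.trans (hV' t ht (x t)).2)))
    rw [decayRate, hκ.inv_apply hq.le]
    exact min_le_right _ _
  · rw [hleft i hi] at hVi ⊢
    exact hjumpV i hi (hηr.trans hVi)
  · rw [hleft i hi] at hVi
    by_cases hL : η r ≤ Function.leftLim (fun t => Vc (x t)) (τ i)
    · exact ((hjumpV i hi hL).trans hVi.le).trans (le_max_right _ _)
    · exact ((hV' _ (hτ.1 ▸ hτ.2.1.monotone (Nat.zero_le i)) _).2.trans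
        (hjump' i hi (not_le.1 hL))).trans (le_max_left _ _)

/-- construction of a time-varying ISS-Lyapunov function
`V(t,y) = max{v₁(t,y), v₂(t,y)}` from a candidate ISS-Lyapunov function, in the
stable-flow/unstable-jump case.  Here `F̃(q) = ∫₁^q ds/ρ(s)` for `q > 0`,
`m = lim_{q→0⁺} F̃(q) ∈ [-∞,∞)`, and `G` extends `F̃⁻¹` by `0` on `(-∞, m]`
(the specification `hG2` says exactly `G p = 0` whenever `p ≤ m`); the convention
`F̃(0) := m` makes `v₁(t,y) = 0` when `V_cand(y) = 0`, encoded by the `if`. -/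
theorem constructionStableFlow
    (ρ α αinv κ κd : ℝ → ℝ)
    (hρ : ClassP ρ) (hα : ClassKInf α) (hαge : ∀ a, 0 ≤ a → a ≤ α a)
    (hαinv1 : ∀ s, 0 ≤ s → αinv (α s) = s)
    (hαinv2 : ∀ s, 0 ≤ s → 0 ≤ αinv s ∧ α (αinv s) = s)
    (θ δ : ℝ) (hδ : 0 < δ) (hθδ : δ < θ)
    (hdwellint : ∀ a, 0 < a → (∫ s in a..(α a), (ρ s)⁻¹) ≤ θ - δ)
    (hκ : ClassKInf κ)
    (hκderiv : ∀ s, 0 ≤ s → HasDerivWithinAt κ (κd s) (Set.Ici 0) s)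
    (hκdP : ClassP κd)
    (hκle : ∀ s, 0 ≤ s → κ s ≤ min (αinv s) s)
    (Ftil G : ℝ → ℝ)
    (hFtil : ∀ q, Ftil q = ∫ s in (1:ℝ)..q, (ρ s)⁻¹)
    (hG1 : ∀ q, 0 < q → G (Ftil q) = q)
    (hG2 : ∀ p : ℝ, (∀ q, 0 < q → p ≤ Ftil q) → G p = 0) :
    ∃ φ : ℝ → ℝ, ClassP φ ∧
      ∀ ψ₁ ψ₂ η ψ₃ : ℝ → ℝ, ClassKInf ψ₁ → ClassKInf ψ₂ → ClassKInf η → ClassK ψ₃ →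
      ∀ (X : Type u) [NormedAddCommGroup X] [NormedSpace ℝ X],
      ∀ (t₀ : ℝ) (τ : ℕ → ℝ), IsImpulseSeq t₀ τ →
      (∀ i : ℕ, θ ≤ τ (i + 1) - τ i) →
      ∀ r : ℝ, 0 ≤ r →
      ∀ Vc : X → ℝ, Continuous Vc →
      (∀ y : X, ψ₁ ‖y‖ ≤ Vc y ∧ Vc y ≤ ψ₂ ‖y‖) →
      ∀ x : ℝ → X,
      ImpulsiveRegular t₀ τ (fun t => Vc (x t)) →
      (∀ t, t₀ ≤ t → t ∉ impulseSet τ → η r ≤ Vc (x t) →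
        DiniUpper (fun s => Vc (x s)) t ≤ (((-ρ (Vc (x t))) : ℝ) : EReal)) →
      (∀ i : ℕ, 1 ≤ i → η r ≤ Function.leftLim (fun s => Vc (x s)) (τ i) →
        Vc (x (τ i)) ≤ α (Function.leftLim (fun s => Vc (x s)) (τ i))) →
      (∀ i : ℕ, 1 ≤ i → Function.leftLim (fun s => Vc (x s)) (τ i) < η r →
        Vc (x (τ i)) ≤ ψ₃ r) →
      ∀ V : ℝ → X → ℝ,
      (∀ i : ℕ, ∀ t, τ i ≤ t → t < τ (i + 1) → ∀ y : X,
        V t y = max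
          (if Vc y = 0 then 0
            else G (Ftil (Vc y) - ((τ (i + 1) - t) / (τ (i + 1) - τ i)) * (θ - δ)))
          (κ (Vc y))) →
      -- (i) sandwich bounds
      (∀ t, t₀ ≤ t → ∀ y : X, κ (ψ₁ ‖y‖) ≤ V t y ∧ V t y ≤ ψ₂ ‖y‖) ∧
      -- the map t ↦ V(t, x(t)) is impulsive-regular
      ImpulsiveRegular t₀ τ (fun t => V t (x t)) ∧
      -- (ii) decay along the flow outside the perturbation radius χ(r) = α(η(r))
      (∀ t, t₀ ≤ t → t ∉ impulseSet τ → α (η r) ≤ V t (x t) →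
        DiniUpper (fun s => V s (x s)) t ≤ (((-φ (V t (x t))) : ℝ) : EReal)) ∧
      -- (ii) non-increase at jumps outside the perturbation radius
      (∀ i : ℕ, 1 ≤ i → α (η r) ≤ Function.leftLim (fun s => V s (x s)) (τ i) →
        V (τ i) (x (τ i)) ≤ Function.leftLim (fun s => V s (x s)) (τ i)) ∧
      -- (iii) bound at jumps inside the perturbation radius
      (∀ i : ℕ, 1 ≤ i → Function.leftLim (fun s => V s (x s)) (τ i) < α (η r) →
        V (τ i) (x (τ i)) ≤ max (ψ₃ r) (α (η r))) :=
  constructionStableFlow_general ρ α αinv κ κd hρ hα hαge hαinv2 θ δ hδ hθδ hdwellint hκ hκderiv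
    hκdP hκle Ftil G hFtil hG1 hG2
end
end

section
/- Let ρ ∈ 𝒫 with ∫₀¹ ds/ρ(s) = ∞, and set F̃(q) := ∫₁^q ds/ρ(s) for q > 0, so that F̃ is a strictly increasing continuous bijection from (0,∞) onto (−∞, M̃) where M̃ := lim_{q→∞} F̃(q) ∈ (0,∞]. Let θ > δ > 0 and tᵢ < t_{i+1} be reals with t_{i+1} − tᵢ ≥ θ. Let w: [tᵢ, t_{i+1}) → (0,∞) be continuous with D⁺w(t) ≤ −ρ(w(t)) for all t ∈ [tᵢ, t_{i+1}). Define z(t) := F̃⁻¹( F̃(w(t)) − ((t_{i+1} − t)/(t_{i+1} − tᵢ))(θ − δ) ). Then D⁺z(t) ≤ −(δ/θ) ρ(z(t)) for all t ∈ [tᵢ, t_{i+1}). -/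
open Filter Topology Set MeasureTheory

noncomputable section

/-!
With `F̃' = 1/ρ` on `(0, ∞)`, the map `F̃⁻¹` is differentiable at every value of `F̃`, with
derivative `ρ ∘ F̃⁻¹`; the divergence of `∫₀¹ ds/ρ(s)` makes every value below `F̃(w(t))` a value
of `F̃`, so `z = F̃⁻¹ ∘ G` with `G(t) = F̃(w(t)) − c(t)` and `c' = −(θ − δ)/(t_{i+1} − tᵢ)`.
Upper right Dini derivatives obey the chain rule through increasing differentiable maps, as
inequalities: `D⁺(F̃ ∘ w) ≤ −1`, hence `D⁺G ≤ −1 + (θ − δ)/(t_{i+1} − tᵢ) ≤ −δ/θ` by the dwell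
time `t_{i+1} − tᵢ ≥ θ`, and `D⁺z ≤ ρ(z) · D⁺G`.
-/

section DiniUpper

variable {v : ℝ → ℝ} {t : ℝ}

lemma eventually_lt_of_diniUpper_lt {r : ℝ} (h : DiniUpper v t < r) :
    ∀ᶠ s in 𝓝[>] 0, (v (t + s) - v t) / s < r := by
  filter_upwards [eventually_lt_of_limsup_lt h] with s hs
  exact_mod_cast hs

lemma diniUpper_le_of_forall_lt {m : ℝ}
    (h : ∀ R, m < R → ∀ᶠ s in 𝓝[>] 0, (v (t + s) - v t) / s < R) : DiniUpper v t ≤ m := by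
  refine EReal.le_of_forall_lt_iff_le.1 fun R hR => limsup_le_of_le (by isBoundedDefault) ?_
  filter_upwards [h R (EReal.coe_lt_coe_iff.1 hR)] with s hs
  exact_mod_cast hs.le

lemma diniUpper_sub_le {h : ℝ → ℝ} {h' m : ℝ} (hh : HasDerivAt h h' t)
    (hv : DiniUpper v t ≤ m) : DiniUpper (fun r => v r - h r) t ≤ ↑(m - h') := by
  refine diniUpper_le_of_forall_lt fun R hR => ?_
  set ε := (R - (m - h')) / 2
  have hε : 0 < ε := by simp only [ε]; linarith
  have hslope : Tendsto (fun s => (h (t + s) - h t) / s) (𝓝[>] 0) (𝓝 h') := by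
    simpa only [smul_eq_mul, inv_mul_eq_div] using hh.tendsto_slope_zero_right
  filter_upwards [eventually_lt_of_diniUpper_lt (hv.trans_lt (EReal.coe_lt_coe_iff.2
    (lt_add_of_pos_right m hε))), hslope.eventually (lt_mem_nhds (sub_lt_self h' hε))]
    with s hvs hhs
  rw [sub_sub_sub_comm, sub_div]
  simp only [ε] at hvs hhs ⊢
  linarith

lemma diniUpper_comp_le_s7 {g : ℝ → ℝ} {g' m : ℝ} (hg : HasDerivAt g g' (v t)) (hg' : 0 < g')
    (hv : ContinuousWithinAt v (Ioi t) t) (hm : DiniUpper v t ≤ m) :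
    DiniUpper (g ∘ v) t ≤ ↑(g' * m) := by
  -- Carathéodory form of the derivative: `g y - g (v t) = σ y * (y - v t)`, `σ` continuous at `v t`
  set σ := Function.update (slope g (v t)) (v t) g' with hσdef
  have hσ : ContinuousAt σ (v t) := continuousAt_update_same.2 hg.tendsto_slope
  have hgσ : ∀ y, g y - g (v t) = σ y * (y - v t) := by
    intro y
    rcases eq_or_ne y (v t) with rfl | hy
    · simp
    · rw [hσdef, Function.update_of_ne hy, slope_def_field, div_mul_cancel₀ _ (sub_ne_zero.2 hy)]
  have hvt : Tendsto (fun s => v (t + s)) (𝓝[>] 0) (𝓝 (v t)) := by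
    refine hv.tendsto.comp ?_
    have := (Filter.map_add_left_nhdsGT (c := t) (a := (0 : ℝ))).le
    rwa [add_zero] at this
  have hσv : Tendsto (fun s => σ (v (t + s))) (𝓝[>] 0) (𝓝 g') := by
    have h := hσ.tendsto.comp hvt
    rwa [hσdef, Function.update_self] at h
  refine diniUpper_le_of_forall_lt fun R hR => ?_
  obtain ⟨r, hmr, hrR⟩ : ∃ r, m < r ∧ g' * r < R := by
    obtain ⟨r, hmr, hrR⟩ := exists_between ((lt_div_iff₀' hg').2 hR)
    exact ⟨r, hmr, (lt_div_iff₀' hg').1 hrR⟩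
  filter_upwards [eventually_lt_of_diniUpper_lt (hm.trans_lt (EReal.coe_lt_coe_iff.2 hmr)),
    hσv.eventually (lt_mem_nhds hg'), (hσv.mul_const r).eventually (gt_mem_nhds hrR)]
    with s hq hpos hlt
  calc (g (v (t + s)) - g (v t)) / s = σ (v (t + s)) * ((v (t + s) - v t) / s) := by
        rw [hgσ, mul_div_assoc]
    _ ≤ σ (v (t + s)) * r := by gcongr
    _ < R := hlt

lemma diniUpper_comp_le_of_leftInverse {F Finv : ℝ → ℝ} {F' a m : ℝ}
    (hF : HasStrictDerivAt F F' a) (hF' : 0 < F') (hinv : ∀ᶠ q in 𝓝 a, Finv (F q) = q)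
    (hva : v t = F a) (hv : ContinuousWithinAt v (Ioi t) t) (hm : DiniUpper v t ≤ m) :
    DiniUpper (Finv ∘ v) t ≤ ↑(F'⁻¹ * m) :=
  diniUpper_comp_le_s7 (hva ▸ (hF.to_local_left_inverse hF'.ne' hinv).hasDerivAt) (inv_pos.2 hF') hv hm

end DiniUpper

section IntervalIntegral

variable {f : ℝ → ℝ}

lemma hasStrictDerivAt_integral_of_continuousOn_Ioi {a b : ℝ} (hf : ContinuousOn f (Ioi 0))
    (ha : 0 < a) (hb : 0 < b) : HasStrictDerivAt (fun u => ∫ x in a..u, f x) (f b) b :=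
  intervalIntegral.integral_hasStrictDerivAt_right
    ((hf.mono fun _ hx => (lt_min ha hb).trans_le hx.1).intervalIntegrable)
    (hf.stronglyMeasurableAtFilter isOpen_Ioi b hb) (hf.continuousAt (Ioi_mem_nhds hb))

lemma exists_intervalIntegral_le_of_lintegral_eq_top (hf : ContinuousOn f (Ioi 0))
    (hf0 : ∀ x ∈ Ioi 0, 0 ≤ f x) (hdiv : ∫⁻ x in Ioc 0 1, ENNReal.ofReal (f x) = ⊤) (y : ℝ) :
    ∃ p ∈ Ioi 0, ∫ x in (1 : ℝ)..p, f x ≤ y := by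
  by_contra! h
  have hint : ∀ n : ℕ, IntegrableOn f (Ioc (1 / (n + 1)) 1) := fun n =>
    ((hf.mono fun x hx => lt_of_lt_of_le (by positivity) hx.1).integrableOn_Icc).mono_set
      Ioc_subset_Icc_self
  have hbdd : ∀ n : ℕ, ∫ x in Ioc (1 / (n + 1) : ℝ) 1, ‖f x‖ ≤ -y := by
    intro n
    have hn : (0 : ℝ) < 1 / (n + 1) := by positivity
    have hn1 : (1 : ℝ) / (n + 1) ≤ 1 :=
      div_le_one_of_le₀ (by linarith [n.cast_nonneg (α := ℝ)]) (by positivity)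
    rw [setIntegral_congr_fun measurableSet_Ioc
        fun x hx => Real.norm_of_nonneg (hf0 x (hn.trans hx.1)),
      ← intervalIntegral.integral_of_le hn1, intervalIntegral.integral_symm]
    linarith [h _ hn]
  have : IntegrableOn f (Ioc 0 1) :=
    integrableOn_Ioc_of_intervalIntegral_norm_bounded_left hint
      tendsto_one_div_add_atTop_nhds_zero_nat (Eventually.of_forall hbdd)
  exact this.lintegral_lt_top.ne hdiv

lemma exists_pos_intervalIntegral_eq (hf : ContinuousOn f (Ioi 0)) (hf0 : ∀ x ∈ Ioi 0, 0 ≤ f x)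
    (hdiv : ∫⁻ x in Ioc 0 1, ENNReal.ofReal (f x) = ⊤) {q y : ℝ} (hq : 0 < q)
    (hy : y ≤ ∫ x in (1 : ℝ)..q, f x) :
    ∃ p ∈ Ioi 0, ∫ x in (1 : ℝ)..p, f x = y := by
  obtain ⟨p, hp, hpy⟩ := exists_intervalIntegral_le_of_lintegral_eq_top hf hf0 hdiv y
  have hpq : uIcc p q ⊆ Ioi 0 := fun _ hx => (lt_min hp hq).trans_le hx.1
  have hcont : ContinuousOn (fun u => ∫ x in (1 : ℝ)..u, f x) (uIcc p q) := fun u hu =>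
    (hasStrictDerivAt_integral_of_continuousOn_Ioi hf one_pos (hpq hu)).hasDerivAt.continuousAt
      |>.continuousWithinAt
  obtain ⟨x, hx, hxy⟩ := intermediate_value_uIcc hcont (mem_uIcc.2 (Or.inl ⟨hpy, hy⟩))
  exact ⟨x, hpq hx, hxy⟩

end IntervalIntegral

namespace ClassP

variable {ρ : ℝ → ℝ}

lemma continuousOn_inv_s7 (hρ : ClassP ρ) : ContinuousOn (fun s => (ρ s)⁻¹) (Ioi 0) :=
  (hρ.1.mono Ioi_subset_Ici_self).inv₀ fun s hs => (hρ.2.2 s hs).ne'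

lemma hasStrictDerivAt_integral_inv (hρ : ClassP ρ) {q : ℝ} (hq : 0 < q) :
    HasStrictDerivAt (fun u => ∫ s in (1 : ℝ)..u, (ρ s)⁻¹) (ρ q)⁻¹ q :=
  hasStrictDerivAt_integral_of_continuousOn_Ioi hρ.continuousOn_inv_s7 one_pos hq

lemma exists_pos_integral_inv_eq (hρ : ClassP ρ)
    (hdiv : ∫⁻ s in Ioc 0 1, ENNReal.ofReal (ρ s)⁻¹ = ⊤)
    {q y : ℝ} (hq : 0 < q) (hy : y ≤ ∫ s in (1 : ℝ)..q, (ρ s)⁻¹) :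
    ∃ p ∈ Ioi 0, ∫ s in (1 : ℝ)..p, (ρ s)⁻¹ = y :=
  exists_pos_intervalIntegral_eq hρ.continuousOn_inv_s7
    (fun s hs => (inv_pos.2 (hρ.2.2 s hs)).le) hdiv hq hy

end ClassP

lemma neg_one_add_div_le_neg_div {θ δ T : ℝ} (hθ : 0 < θ) (hδθ : δ ≤ θ) (hT : θ ≤ T) :
    -1 + (θ - δ) / T ≤ -(δ / θ) := by
  have h := div_le_div_of_nonneg_left (sub_nonneg.2 hδθ) hθ hT
  rw [sub_div θ δ θ, div_self hθ.ne'] at h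
  linarith

/-- The divergence `∫₀¹ ds/ρ(s) = ∞` is stated with the lower Lebesgue integral, since the
Bochner integral of a non-integrable function is `0`. -/
theorem flowDecayStableFlow_general
    (ρ : ℝ → ℝ) (hρ : ClassP ρ)
    (hdiv : ∫⁻ s in Set.Ioc (0:ℝ) 1, ENNReal.ofReal ((ρ s)⁻¹) = ⊤)
    (Ftil Finv : ℝ → ℝ)
    (hFtil : ∀ q, Ftil q = ∫ s in (1:ℝ)..q, (ρ s)⁻¹)
    (hFinv : ∀ q, 0 < q → Finv (Ftil q) = q)
    (θ δ : ℝ) (hδ : 0 < δ) (hθδ : δ < θ)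
    (ti tip : ℝ) (hθdwell : θ ≤ tip - ti)
    (w : ℝ → ℝ)
    (hwpos : ∀ t ∈ Set.Ico ti tip, 0 < w t)
    (hwcont : ContinuousOn w (Set.Ico ti tip))
    (hwdini : ∀ t ∈ Set.Ico ti tip, DiniUpper w t ≤ (((-ρ (w t)) : ℝ) : EReal))
    (z : ℝ → ℝ)
    (hz : ∀ t, z t = Finv (Ftil (w t) - ((tip - t) / (tip - ti)) * (θ - δ))) :
    ∀ t ∈ Set.Ico ti tip, DiniUpper z t ≤ (((-(δ / θ * ρ (z t))) : ℝ) : EReal) := by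
  intro t ht
  have hθ : 0 < θ := hδ.trans hθδ
  have hF : ∀ q, 0 < q → HasStrictDerivAt Ftil (ρ q)⁻¹ q := fun q hq => by
    simpa only [← funext hFtil] using hρ.hasStrictDerivAt_integral_inv hq
  set c : ℝ → ℝ := fun r => (tip - r) / (tip - ti) * (θ - δ)
  have hc : HasDerivAt c (-((θ - δ) / (tip - ti))) t :=
    (((hasDerivAt_id t).const_sub tip).div_const (tip - ti)).mul_const (θ - δ)
      |>.congr_deriv (by ring)
  set G : ℝ → ℝ := fun r => Ftil (w r) - c r
  have hb : 0 < w t := hwpos t ht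
  obtain ⟨a, ha, hFa⟩ : ∃ a ∈ Ioi 0, Ftil a = G t := by
    have hct : 0 ≤ c t := mul_nonneg
      (div_nonneg (sub_pos.2 ht.2).le (hθ.trans_le hθdwell).le) (sub_pos.2 hθδ).le
    simpa only [hFtil] using hρ.exists_pos_integral_inv_eq hdiv hb
      (by rw [← hFtil]; exact sub_le_self _ hct)
  have hw : ContinuousWithinAt w (Ioi t) t := (hwcont t ht).mono_of_mem_nhdsWithin
    (mem_of_superset (Ioo_mem_nhdsGT ht.2) fun r hr => ⟨ht.1.trans hr.1.le, hr.2⟩)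
  have hFw : DiniUpper (Ftil ∘ w) t ≤ ↑(-1 : ℝ) := by
    simpa [inv_mul_cancel₀ (hρ.2.2 _ hb).ne'] using
      diniUpper_comp_le_s7 (hF _ hb).hasDerivAt (inv_pos.2 (hρ.2.2 _ hb)) hw (hwdini t ht)
  have hG : DiniUpper G t ≤ ↑(-(δ / θ)) := (diniUpper_sub_le hc hFw).trans <|
    EReal.coe_le_coe_iff.2 (by simpa using neg_one_add_div_le_neg_div hθ hθδ.le hθdwell)
  have hGcont : ContinuousWithinAt G (Ioi t) t :=
    ((hF _ hb).hasDerivAt.continuousAt.comp_continuousWithinAt hw).sub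
      hc.continuousAt.continuousWithinAt
  have := diniUpper_comp_le_of_leftInverse (hF a ha) (inv_pos.2 (hρ.2.2 a ha))
    (eventually_of_mem (Ioi_mem_nhds ha) hFinv) hFa.symm hGcont hG
  rw [show z = Finv ∘ G from funext hz, Function.comp_apply, ← hFa, hFinv a ha]
  simpa [mul_comm] using this

/-- flow-decay estimate for the rescaled component
`z(t) = F̃⁻¹(F̃(w(t)) − ((t_{i+1} − t)/(t_{i+1} − tᵢ))(θ − δ))` when `D⁺w ≤ −ρ(w)`.
The divergence hypothesis `∫₀¹ ds/ρ(s) = ∞` is expressed as a lower Lebesgue integral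
being `⊤`, so that `F̃` maps `(0,∞)` onto `(−∞, M̃)`. -/
theorem flowDecayStableFlow
    (ρ : ℝ → ℝ) (hρ : ClassP ρ)
    (hdiv : ∫⁻ s in Set.Ioc (0:ℝ) 1, ENNReal.ofReal ((ρ s)⁻¹) = ⊤)
    (Ftil Finv : ℝ → ℝ)
    (hFtil : ∀ q, Ftil q = ∫ s in (1:ℝ)..q, (ρ s)⁻¹)
    (hFinv : ∀ q, 0 < q → Finv (Ftil q) = q)
    (θ δ : ℝ) (hδ : 0 < δ) (hθδ : δ < θ)
    (ti tip : ℝ) (hlt : ti < tip) (hθdwell : θ ≤ tip - ti)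
    (w : ℝ → ℝ)
    (hwpos : ∀ t ∈ Set.Ico ti tip, 0 < w t)
    (hwcont : ContinuousOn w (Set.Ico ti tip))
    (hwdini : ∀ t ∈ Set.Ico ti tip, DiniUpper w t ≤ (((-ρ (w t)) : ℝ) : EReal))
    (z : ℝ → ℝ)
    (hz : ∀ t, z t = Finv (Ftil (w t) - ((tip - t) / (tip - ti)) * (θ - δ))) :
    ∀ t ∈ Set.Ico ti tip, DiniUpper z t ≤ (((-(δ / θ * ρ (z t))) : ℝ) : EReal) :=
  flowDecayStableFlow_general ρ hρ hdiv Ftil Finv hFtil hFinv θ δ hδ hθδ ti tip hθdwell w hwpos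
    hwcont hwdini z hz
end
end
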